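/- arXiv:0909.4003 — 4 statements merged into one kernel-verified Lean document; each statement's English description precedes it below -/
import Mathlib

section
/- Let o be a commutative ring, B a topological group, B_0 an open subgroup of B such that the category of smooth o-representations of B_0 is noetherian (every o[B_0]-submodule of a finite type smooth representation of B_0 is of finite type). Let 0 -> V' -> V -> V'' -> 0 be an exact sequence of smooth representations of B over o in which V' and V'' are of finite presentation relative to B_0. Then there exist o[B_0]-submodules V_0' of V', V_0 of V, V_0'' of V'', generating V', V, V'' respectively as o[B]-modules, forming an exact sequence 0 -> V_0' -> V_0 -> V_0'' -> 0 of o[B_0]-modules, and such that the three associated presentations ind_{B_0}^B(V_0') -> V', ind_{B_0}^B(V_0) -> V, ind_{B_0}^B(V_0'') -> V'' are finite. -/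
noncomputable section
attribute [local instance] Classical.propDecidable
open Pointwise


/-! ### Generalities on smooth representations over a commutative ring `o` -/

section RepPrelim

variable (o : Type) [CommRing o]

/-- The `o`-submodule of `V` generated by `{s • w | s ∈ S, w ∈ W}`; written `<S W>` in the paper. -/
def gspan {H : Type} (V : Type) [AddCommGroup V] [Module o V] [SMul H V]
    (S : Set H) (W : Set V) : Submodule o V :=
  Submodule.span o {v : V | ∃ s ∈ S, ∃ w ∈ W, v = s • w}

/-- A submodule `N` is stable under the set `S` of group elements. -/
def IsStableSub {H : Type} (V : Type) [AddCommGroup V] [Module o V] [SMul H V]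
    (S : Set H) (N : Submodule o V) : Prop :=
  ∀ s ∈ S, ∀ v ∈ N, s • v ∈ N

/-- `N` is a finitely generated module over `o[S]`. -/
def IsFGOver {H : Type} (V : Type) [AddCommGroup V] [Module o V] [SMul H V]
    (S : Set H) (N : Submodule o V) : Prop :=
  ∃ X : Finset V, (X : Set V) ⊆ (N : Set V) ∧ N = gspan o V S (X : Set V)

/-- The submodule of `S`-invariants. -/
def invariantsSub (H : Type) [Group H] (V : Type) [AddCommGroup V] [Module o V]
    [DistribMulAction H V] [SMulCommClass H o V] (S : Set H) : Submodule o V where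
  carrier := {v | ∀ s ∈ S, s • v = v}
  add_mem' := by intro a b ha hb s hs; rw [smul_add, ha s hs, hb s hs]
  zero_mem' := by intro s hs; exact smul_zero s
  smul_mem' := by intro c v hv s hs; rw [smul_comm, hv s hs]

/-- The action of a fixed group element as an `o`-linear map. -/
def actLin (H : Type) [Group H] (V : Type) [AddCommGroup V] [Module o V]
    [DistribMulAction H V] [SMulCommClass H o V] (g : H) : V →ₗ[o] V where
  toFun v := g • v
  map_add' := smul_add g
  map_smul' c v := by simpa using smul_comm g c v

/-- `V` has finite length as an `o[H]`-module: it admits a composition series of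
`H`-stable `o`-submodules. -/
def IsFiniteLengthRep (H : Type) [Group H] (V : Type) [AddCommGroup V] [Module o V]
    [DistribMulAction H V] : Prop :=
  ∃ (n : ℕ) (c : Fin (n + 1) → Submodule o V),
    c 0 = ⊥ ∧ c (Fin.last n) = ⊤ ∧
    (∀ i, IsStableSub o V (Set.univ : Set H) (c i)) ∧
    (∀ i : Fin n, c i.castSucc < c i.succ) ∧
    (∀ i : Fin n, ∀ N : Submodule o V, IsStableSub o V (Set.univ : Set H) N →
      c i.castSucc ≤ N → N ≤ c i.succ → N = c i.castSucc ∨ N = c i.succ)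

/-- Smoothness: each vector has open stabilizer. -/
def IsSmoothRep (H : Type) [Group H] [TopologicalSpace H] (V : Type) [AddCommGroup V]
    [Module o V] [DistribMulAction H V] : Prop :=
  ∀ v : V, IsOpen {h : H | h • v = v}

/-- Admissibility: invariants under any compact open subgroup form a f.g. `o`-module. -/
def IsAdmissibleRep (H : Type) [Group H] [TopologicalSpace H] (V : Type) [AddCommGroup V]
    [Module o V] [DistribMulAction H V] [SMulCommClass H o V] : Prop :=
  ∀ H' : Subgroup H, IsCompact (H' : Set H) → IsOpen (H' : Set H) →
    (invariantsSub o H V (H' : Set H)).FG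

end RepPrelim

/-! ### Compact induction `ind_{S}^{H}(V₀)` and finite presentations -/

section Induction

variable (o : Type) [CommRing o]
variable {H : Type} [Group H] {V : Type} [AddCommGroup V] [Module o V]
variable [DistribMulAction H V] [SMulCommClass H o V]

/-- The compact induction `ind_S^H (V₀)`, realized as the `o`-module of functions
`f : H → V` with values in `V₀`, satisfying `f (s * h) = s • f h` for `s ∈ S`, and
supported on finitely many right cosets `S * x`. -/
def Ind (S : Subgroup H) (V0 : Submodule o V) : Submodule o (H → V) where
  carrier := {f | (∀ h, f h ∈ V0) ∧ (∀ s ∈ S, ∀ h, f (s * h) = s • f h) ∧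
      ∃ X : Finset H, ∀ h, f h ≠ 0 → ∃ s ∈ S, ∃ x ∈ X, h = s * x}
  add_mem' := by
    rintro f g ⟨hf1, hf2, Xf, hXf⟩ ⟨hg1, hg2, Xg, hXg⟩
    refine ⟨fun h => V0.add_mem (hf1 h) (hg1 h),
      fun s hs h => by simp only [Pi.add_apply, hf2 s hs h, hg2 s hs h, smul_add],
      Xf ∪ Xg, fun h hh => ?_⟩
    by_cases hf : f h = 0
    · have hg : g h ≠ 0 := fun h0 => hh (by simp [Pi.add_apply, hf, h0])
      obtain ⟨s, hs, x, hx, hxx⟩ := hXg h hg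
      exact ⟨s, hs, x, Finset.mem_union_right _ hx, hxx⟩
    · obtain ⟨s, hs, x, hx, hxx⟩ := hXf h hf
      exact ⟨s, hs, x, Finset.mem_union_left _ hx, hxx⟩
  zero_mem' :=
    ⟨fun _ => V0.zero_mem, fun s _ _ => (smul_zero s).symm, ∅, fun h hh => absurd rfl hh⟩
  smul_mem' := by
    rintro c f ⟨hf1, hf2, Xf, hXf⟩
    refine ⟨fun h => V0.smul_mem c (hf1 h),
      fun s hs h => by
        simp only [Pi.smul_apply, hf2 s hs h]
        exact (smul_comm s c (f h)).symm,
      Xf, fun h hh => hXf h (fun h0 => hh (by simp [Pi.smul_apply, h0]))⟩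

variable {S : Subgroup H} {V0 : Submodule o V}

/-- Right translation, giving the `H`-action on the compact induction. -/
def indTrans (g : H) (f : H → V) : H → V := fun h => f (h * g)

lemma indTrans_mem (g : H) {f : H → V} (hf : f ∈ Ind o S V0) : indTrans g f ∈ Ind o S V0 := by
  obtain ⟨h1, h2, X, hX⟩ := hf
  refine ⟨fun h => h1 _, fun s hs h => by
      simpa [indTrans, mul_assoc] using h2 s hs (h * g),
    X.image (· * g⁻¹), fun h hh => ?_⟩
  obtain ⟨s, hs, x, hx, hxx⟩ := hX (h * g) hh
  refine ⟨s, hs, x * g⁻¹, Finset.mem_image_of_mem _ hx, ?_⟩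
  rw [← mul_assoc, ← hxx, mul_assoc, mul_inv_cancel, mul_one]

instance : SMul H (Ind o S V0) :=
  ⟨fun g f => ⟨indTrans g (f : H → V), indTrans_mem o g f.2⟩⟩

lemma ind_smul_apply (g : H) (f : Ind o S V0) (h : H) :
    ((g • f : Ind o S V0) : H → V) h = (f : H → V) (h * g) := rfl

instance : MulAction H (Ind o S V0) where
  one_smul f := Subtype.ext (funext fun h => by simp [ind_smul_apply])
  mul_smul g1 g2 f := Subtype.ext (funext fun h => by simp [ind_smul_apply, mul_assoc])

instance : DistribMulAction H (Ind o S V0) where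
  smul_add g f1 f2 := Subtype.ext (funext fun h => rfl)
  smul_zero g := Subtype.ext (funext fun h => rfl)

instance : SMulCommClass H o (Ind o S V0) :=
  ⟨fun g c f => Subtype.ext (funext fun h => rfl)⟩

/-- The function `[1, v]` supported on `S`, with value `v` at `1`. -/
def unitFn (S : Subgroup H) (v : V) : H → V := fun h => if h ∈ S then h • v else 0

lemma unitFn_mem (hst : IsStableSub o V (S : Set H) V0) {v : V} (hv : v ∈ V0) :
    unitFn S v ∈ Ind o S V0 := by
  refine ⟨fun h => ?_, fun s hs h => ?_, {1}, fun h hh => ?_⟩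
  · by_cases h1 : h ∈ S
    · simpa [unitFn, h1] using hst h h1 v hv
    · simp [unitFn, h1, V0.zero_mem]
  · by_cases h1 : h ∈ S
    · have hsh : s * h ∈ S := S.mul_mem hs h1
      simp [unitFn, h1, hsh, mul_smul]
    · have hsh : s * h ∉ S := fun hc => h1 (by simpa using S.mul_mem (S.inv_mem hs) hc)
      simp [unitFn, h1, hsh]
  · by_cases h1 : h ∈ S
    · exact ⟨h, h1, 1, Finset.mem_singleton_self 1, (mul_one h).symm⟩
    · simp [unitFn, h1] at hh

/-- The element `[1, v]` of the compact induction. -/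
def unitElt (hst : IsStableSub o V (S : Set H) V0) {v : V} (hv : v ∈ V0) : Ind o S V0 :=
  ⟨unitFn S v, unitFn_mem o hst hv⟩

/-- `P` is the natural presentation map `ind_S^H (V₀) → V`: it is `H`-equivariant and sends
`[1, v]` to `v`. -/
def IsPresMap (hst : IsStableSub o V (S : Set H) V0) (P : Ind o S V0 →ₗ[o] V) : Prop :=
  (∀ (g : H) (f : Ind o S V0), P (g • f) = g • P f) ∧
  (∀ v (hv : v ∈ V0), P (unitElt o hst hv) = v)

end Induction

/-- `V₀ ⊆ V` yields a finite presentation `ind_S^H (V₀) → V`: `V₀` is an `S`-stable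
`o`-submodule, finitely generated over `o[S]`, generating `V` over `o[H]`, and the kernel of
the natural presentation map is finitely generated over `o[H]`. -/
def FinitelyPresentedVia (o : Type) [CommRing o] {H : Type} [Group H] {V : Type}
    [AddCommGroup V] [Module o V] [DistribMulAction H V] [SMulCommClass H o V]
    (S : Subgroup H) (V0 : Submodule o V) : Prop :=
  ∃ hst : IsStableSub o V (S : Set H) V0,
    IsFGOver o V (S : Set H) V0 ∧ gspan o V (Set.univ : Set H) (V0 : Set V) = ⊤ ∧
    ∃ P : Ind o S V0 →ₗ[o] V, IsPresMap o hst P ∧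
      IsFGOver o (Ind o S V0) (Set.univ : Set H) (LinearMap.ker P)

/-- `V` is of finite presentation relative to the open subgroup `S`. -/
def HasFinitePres (o : Type) [CommRing o] {H : Type} [Group H] (V : Type)
    [AddCommGroup V] [Module o V] [DistribMulAction H V] [SMulCommClass H o V]
    (S : Subgroup H) : Prop :=
  ∃ V0 : Submodule o V, FinitelyPresentedVia o S V0

/-!
Choose submodules `V₀'` and `V₀''` giving finite presentations of `V'` and `V''`, and let `W₀` be
the `B₀`-span of `ι V₀'` and of lifts of finitely many generators of `V₀''`, so that `π W₀ = V₀''`.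
As `W₀` is finitely generated, noetherianity makes `W₀ ∩ ker π` finitely generated, hence so is
`ι⁻¹ W₀ ⊇ V₀'`, and enlarging the generating submodule keeps the presentation finite. Compact
induction is exact, so `ind (ι⁻¹ W₀) → ind W₀ → ind V₀''` is exact and the kernel of
`ind W₀ → V` is an extension of the kernel for `V''` by the kernel for `V'`; both are finitely
generated, hence so is it.
-/

section Span

variable {o : Type} [CommRing o] {H : Type} {V : Type} [AddCommGroup V] [Module o V] [SMul H V]
  {V₂ : Type} [AddCommGroup V₂] [Module o V₂] [SMul H V₂] {S : Set H}

lemma gspan_le_iff {W : Set V} {N : Submodule o V} :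
    gspan o V S W ≤ N ↔ ∀ s ∈ S, ∀ w ∈ W, s • w ∈ N := by
  refine Submodule.span_le.trans ⟨fun h s hs w hw => h ⟨s, hs, w, hw, rfl⟩, ?_⟩
  rintro h _ ⟨s, hs, w, hw, rfl⟩
  exact h s hs w hw

lemma smul_mem_gspan {W : Set V} {s : H} (hs : s ∈ S) {w : V} (hw : w ∈ W) :
    s • w ∈ gspan o V S W :=
  Submodule.subset_span ⟨s, hs, w, hw, rfl⟩

lemma gspan_mono {W W' : Set V} (hW : W ⊆ W') : gspan o V S W ≤ gspan o V S W' :=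
  gspan_le_iff.mpr fun _ hs _ hw => smul_mem_gspan hs (hW hw)

lemma gspan_union (W W' : Set V) : gspan o V S (W ∪ W') = gspan o V S W ⊔ gspan o V S W' := by
  refine le_antisymm (gspan_le_iff.mpr ?_) (sup_le (gspan_mono Set.subset_union_left)
    (gspan_mono Set.subset_union_right))
  rintro s hs w (hw | hw)
  · exact Submodule.mem_sup_left (smul_mem_gspan hs hw)
  · exact Submodule.mem_sup_right (smul_mem_gspan hs hw)

lemma IsStableSub.gspan_le {W : Set V} {N : Submodule o V} (hN : IsStableSub o V S N)
    (hW : W ⊆ N) : gspan o V S W ≤ N :=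
  gspan_le_iff.mpr fun s hs w hw => hN s hs w (hW hw)

lemma IsStableSub.inf {N N' : Submodule o V} (hN : IsStableSub o V S N)
    (hN' : IsStableSub o V S N') : IsStableSub o V S (N ⊓ N') :=
  fun s hs v hv => ⟨hN s hs v hv.1, hN' s hs v hv.2⟩

lemma IsStableSub.map {F : V →ₗ[o] V₂} (hF : ∀ (g : H) (v : V), F (g • v) = g • F v)
    {N : Submodule o V} (hN : IsStableSub o V S N) : IsStableSub o V₂ S (N.map F) := by
  rintro s hs _ ⟨v, hv, rfl⟩
  exact ⟨s • v, hN s hs v hv, hF s v⟩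

lemma IsStableSub.comap {F : V →ₗ[o] V₂} (hF : ∀ (g : H) (v : V), F (g • v) = g • F v)
    {N : Submodule o V₂} (hN : IsStableSub o V₂ S N) : IsStableSub o V S (N.comap F) :=
  fun s hs v hv => by
    rw [Submodule.mem_comap, hF]
    exact hN s hs _ hv

lemma isStableSub_range {F : V →ₗ[o] V₂} (hF : ∀ (g : H) (v : V), F (g • v) = g • F v) :
    IsStableSub o V₂ S (LinearMap.range F) := by
  rintro s - _ ⟨v, rfl⟩
  exact ⟨s • v, hF s v⟩

lemma IsFGOver.sup {N N' : Submodule o V} (hN : IsFGOver o V S N) (hN' : IsFGOver o V S N') :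
    IsFGOver o V S (N ⊔ N') := by
  obtain ⟨X, hXN, rfl⟩ := hN
  obtain ⟨X', hXN', rfl⟩ := hN'
  refine ⟨X ∪ X', ?_, by rw [Finset.coe_union, gspan_union]⟩
  rw [Finset.coe_union]
  exact Set.union_subset (hXN.trans fun _ => Submodule.mem_sup_left)
    (hXN'.trans fun _ => Submodule.mem_sup_right)

end Span

section Pushforward

variable {o : Type} [CommRing o] {G₁ G₂ : Type} {V₁ V₂ : Type} [AddCommGroup V₁] [Module o V₁]
  [AddCommGroup V₂] [Module o V₂] [SMul G₁ V₁] [SMul G₂ V₂] {F : V₁ →ₗ[o] V₂} {ρ : G₁ → G₂}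
  {S₁ : Set G₁} {S₂ : Set G₂}

lemma map_gspan (hS : ρ '' S₁ = S₂) (hF : ∀ s ∈ S₁, ∀ v : V₁, F (s • v) = ρ s • F v)
    (W : Set V₁) : (gspan o V₁ S₁ W).map F = gspan o V₂ S₂ (F '' W) := by
  rw [gspan, gspan, Submodule.map_span, ← hS]
  congr 1
  ext v
  constructor
  · rintro ⟨_, ⟨s, hs, w, hw, rfl⟩, rfl⟩
    exact ⟨ρ s, ⟨s, hs, rfl⟩, F w, ⟨w, hw, rfl⟩, hF s hs w⟩
  · rintro ⟨_, ⟨s, hs, rfl⟩, _, ⟨w, hw, rfl⟩, rfl⟩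
    exact ⟨s • w, ⟨s, hs, w, hw, rfl⟩, hF s hs w⟩

lemma IsFGOver.map (hS : ρ '' S₁ = S₂) (hF : ∀ s ∈ S₁, ∀ v : V₁, F (s • v) = ρ s • F v)
    {N : Submodule o V₁} (hN : IsFGOver o V₁ S₁ N) : IsFGOver o V₂ S₂ (N.map F) := by
  obtain ⟨X, hXN, rfl⟩ := hN
  refine ⟨X.image F, ?_, by rw [map_gspan hS hF, Finset.coe_image]⟩
  rw [Finset.coe_image, Submodule.map_coe]
  exact Set.image_mono hXN

lemma IsFGOver.of_map_injective (hS : ρ '' S₁ = S₂)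
    (hF : ∀ s ∈ S₁, ∀ v : V₁, F (s • v) = ρ s • F v) (hinj : Function.Injective F)
    {N : Submodule o V₁} (hN : IsFGOver o V₂ S₂ (N.map F)) : IsFGOver o V₁ S₁ N := by
  obtain ⟨X, hXN, hX⟩ := hN
  have hXrange : (X : Set V₂) ⊆ Set.range F :=
    hXN.trans (by rw [Submodule.map_coe]; exact Set.image_subset_range _ _)
  refine ⟨X.preimage F hinj.injOn, fun v hv => ?_, Submodule.map_injective_of_injective hinj ?_⟩
  · obtain ⟨n, hn, hnv⟩ := hXN (Finset.mem_preimage.mp hv)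
    exact hinj hnv ▸ hn
  · rw [hX, map_gspan hS hF, Finset.coe_preimage, Set.image_preimage_eq_of_subset hXrange]

end Pushforward

section Extension

variable {o : Type} [CommRing o] {H : Type} {V : Type} [AddCommGroup V] [Module o V] [SMul H V]
  {V₂ : Type} [AddCommGroup V₂] [Module o V₂] [SMul H V₂] {S : Set H}

lemma IsFGOver.of_map_of_inf_ker {F : V →ₗ[o] V₂} (hF : ∀ (g : H) (v : V), F (g • v) = g • F v)
    {K : Submodule o V} (hK : IsStableSub o V S K) (hmap : IsFGOver o V₂ S (K.map F))
    (hker : IsFGOver o V S (K ⊓ LinearMap.ker F)) : IsFGOver o V S K := by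
  obtain ⟨X, hXK, hX⟩ := hmap
  obtain ⟨Y, hYK, hY⟩ := hker
  choose! lift hliftK hliftF using fun x (hx : x ∈ (X : Set V₂)) => hXK hx
  have hlift : lift '' X ⊆ K := Set.image_subset_iff.mpr hliftK
  have hgen : ((X.image lift ∪ Y : Finset V) : Set V) = lift '' X ∪ Y := by
    rw [Finset.coe_union, Finset.coe_image]
  have hsub : ((X.image lift ∪ Y : Finset V) : Set V) ⊆ K :=
    hgen ▸ Set.union_subset hlift fun y hy => (hYK hy).1
  refine ⟨X.image lift ∪ Y, hsub, le_antisymm (fun k hk => ?_) (hK.gspan_le hsub)⟩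
  have hmapK : K.map F ≤ (gspan o V S (lift '' X)).map F := by
    rw [hX, map_gspan (Set.image_id S) (fun s _ v => hF s v), Set.image_image,
      Set.EqOn.image_eq_self hliftF]
  obtain ⟨t, ht, htk⟩ := hmapK (Submodule.mem_map_of_mem hk)
  have hkt : k - t ∈ gspan o V S Y :=
    hY ▸ ⟨K.sub_mem hk (hK.gspan_le hlift ht), by simp [LinearMap.mem_ker, htk]⟩
  rw [hgen, gspan_union]
  simpa using Submodule.add_mem_sup ht hkt

end Extension

section StableSpan

variable {o : Type} [CommRing o] {H : Type} [Group H] {V : Type} [AddCommGroup V] [Module o V]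
  [DistribMulAction H V] {V₂ : Type} [AddCommGroup V₂] [Module o V₂] [DistribMulAction H V₂]
  {S : Set H}

lemma isStableSub_gspan [SMulCommClass H o V] (hS : ∀ a ∈ S, ∀ b ∈ S, a * b ∈ S) (W : Set V) :
    IsStableSub o V S (gspan o V S W) := by
  intro s hs v hv
  have hle : gspan o V S W ≤ (gspan o V S W).comap (actLin o H V s) :=
    gspan_le_iff.mpr fun a ha w hw => by
      rw [Submodule.mem_comap, actLin, LinearMap.coe_mk, AddHom.coe_mk, smul_smul]
      exact smul_mem_gspan (hS s hs a ha) hw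
  exact hle hv

lemma subset_gspan (h1 : (1 : H) ∈ S) (W : Set V) : W ⊆ gspan o V S W :=
  fun w hw => by simpa using smul_mem_gspan (o := o) h1 hw

lemma isFGOver_gspan (h1 : (1 : H) ∈ S) (X : Finset V) : IsFGOver o V S (gspan o V S X) :=
  ⟨X, subset_gspan h1 _, rfl⟩

lemma IsStableSub.sup {N N' : Submodule o V} (hN : IsStableSub o V S N)
    (hN' : IsStableSub o V S N') : IsStableSub o V S (N ⊔ N') := by
  intro s hs v hv
  obtain ⟨a, ha, b, hb, rfl⟩ := Submodule.mem_sup.mp hv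
  rw [smul_add]
  exact Submodule.add_mem_sup (hN s hs a ha) (hN' s hs b hb)

lemma isStableSub_ker {F : V →ₗ[o] V₂} (hF : ∀ (g : H) (v : V), F (g • v) = g • F v) :
    IsStableSub o V S (LinearMap.ker F) :=
  fun s _ v hv => by rw [LinearMap.mem_ker, hF, LinearMap.mem_ker.mp hv, smul_zero]

end StableSpan

section UnitElt

variable {o : Type} [CommRing o] {H : Type} [Group H] {V : Type} [AddCommGroup V] [Module o V]
  [DistribMulAction H V] [SMulCommClass H o V] {S : Subgroup H} {V0 : Submodule o V}

lemma unitElt_smul (hst : IsStableSub o V (S : Set H) V0) {s : H} (hs : s ∈ S) {v : V}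
    (hv : v ∈ V0) : unitElt o hst (hst s hs v hv) = s • unitElt o hst hv := by
  refine Subtype.ext (funext fun h => ?_)
  show unitFn S (s • v) h = unitFn S v (h * s)
  unfold unitFn
  by_cases h1 : h ∈ S
  · rw [if_pos h1, if_pos (S.mul_mem h1 hs), mul_smul]
  · rw [if_neg h1, if_neg (fun hc => h1 (by simpa using S.mul_mem hc (S.inv_mem hs)))]

def unitLin (hst : IsStableSub o V (S : Set H) V0) : V0 →ₗ[o] Ind o S V0 where
  toFun v := unitElt o hst v.2
  map_add' v w := Subtype.ext <| funext fun h => by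
    show unitFn S ((v : V) + (w : V)) h = unitFn S (v : V) h + unitFn S (w : V) h
    unfold unitFn
    split_ifs <;> simp [smul_add]
  map_smul' c v := Subtype.ext <| funext fun h => by
    show unitFn S (c • (v : V)) h = c • unitFn S (v : V) h
    unfold unitFn
    split_ifs <;> simp [smul_comm]

lemma inv_smul_unitElt_apply (hst : IsStableSub o V (S : Set H) V0) (f : Ind o S V0) (x h : H) :
    ((x⁻¹ • unitElt o hst (f.2.1 x) : Ind o S V0) : H → V) h =
      if h * x⁻¹ ∈ S then (f : H → V) h else 0 := by
  show unitFn S ((f : H → V) x) (h * x⁻¹) = _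
  unfold unitFn
  split_ifs with hc
  · rw [← f.2.2.1 _ hc x, inv_mul_cancel_right]
  · rfl

lemma mem_of_unitElt_mem (hst : IsStableSub o V (S : Set H) V0) {N : Submodule o (Ind o S V0)}
    (hN : IsStableSub o (Ind o S V0) (Set.univ : Set H) N)
    (hunit : ∀ v (hv : v ∈ V0), unitElt o hst hv ∈ N)
    (f : Ind o S V0) : f ∈ N := by
  suffices ∀ X : Finset H, ∀ f : Ind o S V0,
      (∀ h, (f : H → V) h ≠ 0 → ∃ s ∈ S, ∃ x ∈ X, h = s * x) → f ∈ N from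
    let ⟨_, _, X, hX⟩ := f.2; this X f hX
  intro X
  induction X using Finset.induction_on with
  | empty =>
    intro f hf
    have hf0 : f = 0 := Subtype.ext <| funext fun h => by_contra fun hh => by simpa using hf h hh
    exact hf0 ▸ N.zero_mem
  | insert x X _ ih =>
    intro f hf
    -- `x⁻¹ • [1, f x]` agrees with `f` on the coset `S * x` and vanishes off it
    have hrest : f - x⁻¹ • unitElt o hst (f.2.1 x) ∈ N := by
      refine ih _ fun h hh => ?_
      rw [Submodule.coe_sub, Pi.sub_apply, inv_smul_unitElt_apply] at hh
      split_ifs at hh with hS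
      · exact absurd (sub_self _) hh
      obtain ⟨s, hs, y, hy, rfl⟩ := hf h (by simpa using hh)
      rcases Finset.mem_insert.mp hy with rfl | hy
      · exact absurd (by simpa using hs) hS
      · exact ⟨s, hs, y, hy, rfl⟩
    simpa using N.add_mem hrest (hN x⁻¹ trivial _ (hunit _ (f.2.1 x)))

lemma mem_of_unitElt_generators_mem (hst : IsStableSub o V (S : Set H) V0) {X : Set V}
    (hX : V0 = gspan o V (S : Set H) X) {N : Submodule o (Ind o S V0)}
    (hN : IsStableSub o (Ind o S V0) (Set.univ : Set H) N)
    (hunit : ∀ x (hx : x ∈ V0), x ∈ X → unitElt o hst hx ∈ N) (f : Ind o S V0) : f ∈ N := by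
  have hgen : gspan o V (S : Set H) X ≤ (N.comap (unitLin hst)).map V0.subtype :=
    gspan_le_iff.mpr fun s hs x hx => by
      have hxV : x ∈ V0 := hX ▸ subset_gspan S.one_mem X hx
      refine ⟨⟨s • x, hst s hs x hxV⟩, ?_, rfl⟩
      show unitElt o hst (hst s hs x hxV) ∈ N
      rw [unitElt_smul hst hs hxV]
      exact hN s trivial _ (hunit x hxV hx)
  refine mem_of_unitElt_mem hst hN (fun v hv => ?_) f
  obtain ⟨w, hw, rfl⟩ := hgen (hX ▸ hv)
  exact hw

end UnitElt

section PresMap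

variable {o : Type} [CommRing o] {H : Type} [Group H] {V : Type} [AddCommGroup V] [Module o V]
  [DistribMulAction H V] [SMulCommClass H o V] {S : Subgroup H} {V0 : Submodule o V}

/-- For `f ∈ Ind`, `h ↦ h⁻¹ • f h` is constant on right cosets (`cosetFn_mk`), so it may be
evaluated at the representative `c.out`. -/
def cosetFn (S : Subgroup H) (f : H → V) (c : Quotient (QuotientGroup.rightRel S)) : V :=
  c.out⁻¹ • f c.out

lemma cosetFn_mk {f : H → V} (hf : f ∈ Ind o S V0) (h : H) :
    cosetFn S f (Quotient.mk _ h) = h⁻¹ • f h := by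
  set k := (Quotient.mk (QuotientGroup.rightRel S) h).out
  have hs : h * k⁻¹ ∈ S := QuotientGroup.rightRel_apply.mp (Quotient.mk_out h)
  have hfh : f h = (h * k⁻¹) • f k := by simpa using hf.2.1 _ hs k
  rw [cosetFn, hfh, smul_smul, inv_mul_cancel_left]

lemma hasFiniteSupport_cosetFn {f : H → V} (hf : f ∈ Ind o S V0) :
    Function.HasFiniteSupport (cosetFn S f) := by
  obtain ⟨-, -, X, hX⟩ := hf
  refine (X.finite_toSet.image (Quotient.mk _)).subset fun c hc => ?_
  obtain ⟨s, hs, x, hx, hxx⟩ := hX c.out fun h0 => hc (by simp [cosetFn, h0])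
  refine ⟨x, hx, ?_⟩
  rw [← Quotient.out_eq c]
  exact Quotient.sound (QuotientGroup.rightRel_apply.mpr (by rwa [hxx, mul_inv_cancel_right]))

def presMap (S : Subgroup H) (V0 : Submodule o V) : Ind o S V0 →ₗ[o] V where
  toFun f := ∑ᶠ c, cosetFn S (f : H → V) c
  map_add' f g := by
    rw [← finsum_add_distrib (hasFiniteSupport_cosetFn f.2) (hasFiniteSupport_cosetFn g.2)]
    exact finsum_congr fun c => smul_add _ _ _
  map_smul' a f := by
    rw [RingHom.id_apply, smul_finsum' a (hasFiniteSupport_cosetFn f.2)]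
    exact finsum_congr fun c => smul_comm _ a _

lemma presMap_smul (g : H) (f : Ind o S V0) :
    presMap S V0 (g • f) = g • presMap S V0 f := by
  let e : Quotient (QuotientGroup.rightRel S) ≃ Quotient (QuotientGroup.rightRel S) :=
    Quotient.congr (Equiv.mulRight g) fun a b => by
      simp only [QuotientGroup.rightRel_apply, Equiv.coe_mulRight, mul_inv_rev, mul_assoc,
        mul_inv_cancel_left]
  have hcoset :
      ∀ c, cosetFn S ((g • f : Ind o S V0) : H → V) c = g • cosetFn S (f : H → V) (e c) := by
    refine Quotient.ind fun a => ?_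
    rw [cosetFn_mk (g • f).2, Quotient.congr_mk, Equiv.coe_mulRight, cosetFn_mk f.2, smul_smul,
      ind_smul_apply, mul_inv_rev, mul_inv_cancel_left]
  calc presMap S V0 (g • f) = ∑ᶠ c, g • cosetFn S (f : H → V) (e c) := finsum_congr hcoset
    _ = ∑ᶠ c, g • cosetFn S (f : H → V) c :=
        finsum_comp_equiv e (f := fun c => g • cosetFn S (f : H → V) c)
    _ = g • presMap S V0 f := (smul_finsum' g (hasFiniteSupport_cosetFn f.2)).symm

lemma presMap_unitElt (hst : IsStableSub o V (S : Set H) V0) {v : V} (hv : v ∈ V0) :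
    presMap S V0 (unitElt o hst hv) = v := by
  have hsupp : ∀ c, c ≠ Quotient.mk _ 1 → cosetFn S (unitFn S v) c = 0 := by
    refine Quotient.ind fun a ha => ?_
    have haS : a ∉ S := fun haS =>
      ha (Quotient.sound (QuotientGroup.rightRel_apply.mpr (by simpa using haS)))
    rw [cosetFn_mk (unitFn_mem o hst hv), unitFn, if_neg haS, smul_zero]
  show ∑ᶠ c, cosetFn S (unitFn S v) c = v
  rw [finsum_eq_single _ _ hsupp, cosetFn_mk (unitFn_mem o hst hv), unitFn, if_pos S.one_mem,
    inv_one, one_smul, one_smul]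

lemma isPresMap_presMap (hst : IsStableSub o V (S : Set H) V0) :
    IsPresMap o hst (presMap S V0) :=
  ⟨presMap_smul, fun _ => presMap_unitElt hst⟩

lemma IsPresMap.eq_presMap {hst : IsStableSub o V (S : Set H) V0} {P : Ind o S V0 →ₗ[o] V}
    (hP : IsPresMap o hst P) : P = presMap S V0 := by
  refine LinearMap.ext fun f => mem_of_unitElt_mem hst (N := LinearMap.eqLocus P _) ?_ ?_ f
  · intro g _ f hf
    rw [LinearMap.mem_eqLocus, hP.1, presMap_smul, LinearMap.mem_eqLocus.mp hf]
  · intro v hv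
    rw [LinearMap.mem_eqLocus, hP.2, presMap_unitElt]

lemma presMap_surjective (hst : IsStableSub o V (S : Set H) V0)
    (hgen : gspan o V (Set.univ : Set H) (V0 : Set V) = ⊤) :
    Function.Surjective (presMap S V0) := by
  refine LinearMap.range_eq_top.mp (top_le_iff.mp (hgen ▸ gspan_le_iff.mpr fun g _ v hv => ?_))
  exact ⟨g • unitElt o hst hv, by rw [presMap_smul, presMap_unitElt]⟩

lemma isStableSub_ker_presMap :
    IsStableSub o (Ind o S V0) (Set.univ : Set H) (LinearMap.ker (presMap S V0)) :=
  isStableSub_ker presMap_smul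

end PresMap

section IndMap

variable {o : Type} [CommRing o] {H : Type} [Group H] {V : Type} [AddCommGroup V] [Module o V]
  [DistribMulAction H V] [SMulCommClass H o V] {V₂ : Type} [AddCommGroup V₂] [Module o V₂]
  [DistribMulAction H V₂] [SMulCommClass H o V₂] {S : Subgroup H}
  {V0 : Submodule o V} {W0 : Submodule o V₂}

def indMap (F : V →ₗ[o] V₂) (hF : ∀ (g : H) (v : V), F (g • v) = g • F v)
    (hFW : ∀ v ∈ V0, F v ∈ W0) : Ind o S V0 →ₗ[o] Ind o S W0 where
  toFun f := ⟨F ∘ f, by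
    obtain ⟨hmem, hequiv, X, hX⟩ := f.2
    refine ⟨fun h => hFW _ (hmem h), fun s hs h => by
      simp only [Function.comp_apply, hequiv s hs h, hF],
      X, fun h hh => hX h fun h0 => hh (by simp [h0])⟩⟩
  map_add' f g := Subtype.ext (funext fun h => F.map_add _ _)
  map_smul' a f := Subtype.ext (funext fun h => F.map_smul a _)

lemma indMap_apply {F : V →ₗ[o] V₂} (hF : ∀ (g : H) (v : V), F (g • v) = g • F v)
    (hFW : ∀ v ∈ V0, F v ∈ W0) (f : Ind o S V0) (h : H) :
    (indMap F hF hFW f : H → V₂) h = F ((f : H → V) h) := rfl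

lemma indMap_smul {F : V →ₗ[o] V₂} (hF : ∀ (g : H) (v : V), F (g • v) = g • F v)
    (hFW : ∀ v ∈ V0, F v ∈ W0) (g : H) (f : Ind o S V0) :
    indMap F hF hFW (g • f) = g • indMap F hF hFW f := rfl

lemma indMap_unitElt {F : V →ₗ[o] V₂} (hF : ∀ (g : H) (v : V), F (g • v) = g • F v)
    (hFW : ∀ v ∈ V0, F v ∈ W0) (hst : IsStableSub o V (S : Set H) V0)
    (hstW : IsStableSub o V₂ (S : Set H) W0) {v : V} (hv : v ∈ V0) :
    indMap F hF hFW (unitElt o hst hv) = unitElt o hstW (hFW v hv) := by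
  refine Subtype.ext (funext fun h => ?_)
  show F (unitFn S v h) = unitFn S (F v) h
  unfold unitFn
  split_ifs <;> simp [hF]

lemma presMap_indMap {F : V →ₗ[o] V₂} (hF : ∀ (g : H) (v : V), F (g • v) = g • F v)
    (hFW : ∀ v ∈ V0, F v ∈ W0) (f : Ind o S V0) :
    presMap S W0 (indMap F hF hFW f) = F (presMap S V0 f) := by
  show ∑ᶠ c, cosetFn S (F ∘ (f : H → V)) c = F (∑ᶠ c, cosetFn S (f : H → V) c)
  rw [map_finsum F (hasFiniteSupport_cosetFn f.2)]
  exact finsum_congr fun c => (hF _ _).symm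

end IndMap

section ExactInd

variable {o : Type} [CommRing o] {H : Type} [Group H] {S : Subgroup H}
  {V' : Type} [AddCommGroup V'] [Module o V'] [DistribMulAction H V'] [SMulCommClass H o V']
  {V : Type} [AddCommGroup V] [Module o V] [DistribMulAction H V] [SMulCommClass H o V]
  {V'' : Type} [AddCommGroup V''] [Module o V''] [DistribMulAction H V''] [SMulCommClass H o V'']
  {ι : V' →ₗ[o] V} {π : V →ₗ[o] V''}
  {V0' : Submodule o V'} {V0 : Submodule o V} {V0'' : Submodule o V''}

lemma indMap_indMap_eq_zero (hιeq : ∀ (b : H) (v : V'), ι (b • v) = b • ι v)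
    (hπeq : ∀ (b : H) (v : V), π (b • v) = b • π v) (hι0 : ∀ v ∈ V0', ι v ∈ V0)
    (hπ0 : ∀ v ∈ V0, π v ∈ V0'') (hexact : LinearMap.range ι ≤ LinearMap.ker π)
    (f : Ind o S V0') : indMap π hπeq hπ0 (indMap ι hιeq hι0 f) = 0 :=
  Subtype.ext (funext fun _ => LinearMap.mem_ker.mp (hexact ⟨_, rfl⟩))

lemma indMap_surjective (hπeq : ∀ (b : H) (v : V), π (b • v) = b • π v)
    (hπ0 : ∀ v ∈ V0, π v ∈ V0'') (hst : IsStableSub o V (S : Set H) V0)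
    (hst'' : IsStableSub o V'' (S : Set H) V0'') (hsurj : V0'' ≤ V0.map π) :
    Function.Surjective (indMap (S := S) π hπeq hπ0) := by
  refine fun f => mem_of_unitElt_mem hst'' (isStableSub_range (indMap_smul hπeq hπ0))
    (fun v hv => ?_) f
  obtain ⟨u, hu, rfl⟩ := hsurj hv
  exact ⟨unitElt o hst hu, indMap_unitElt hπeq hπ0 hst hst'' hu⟩

lemma ker_indMap_le_range (hιinj : Function.Injective ι)
    (hιeq : ∀ (b : H) (v : V'), ι (b • v) = b • ι v) (hπeq : ∀ (b : H) (v : V), π (b • v) = b • π v)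
    (hι0 : ∀ v ∈ V0', ι v ∈ V0) (hπ0 : ∀ v ∈ V0, π v ∈ V0'')
    (hexact : ∀ v ∈ V0, π v = 0 → ∃ v' ∈ V0', ι v' = v) :
    LinearMap.ker (indMap (S := S) π hπeq hπ0) ≤ LinearMap.range (indMap ι hιeq hι0) := by
  intro f hf
  choose g hgV hgf using fun h => hexact _ (f.2.1 h)
    (by simpa [indMap_apply] using congrFun (congrArg Subtype.val (LinearMap.mem_ker.mp hf)) h)
  have hg : g ∈ Ind o S V0' := by
    obtain ⟨-, hequiv, X, hX⟩ := f.2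
    refine ⟨hgV, fun s hs h => hιinj (by rw [hgf, hιeq, hgf, hequiv s hs h]), X, fun h hh => ?_⟩
    exact hX h fun h0 => hh (hιinj (by rw [hgf, h0, map_zero]))
  exact ⟨⟨g, hg⟩, Subtype.ext (funext hgf)⟩

lemma map_indMap_ker_presMap (hιeq : ∀ (b : H) (v : V'), ι (b • v) = b • ι v)
    (hπeq : ∀ (b : H) (v : V), π (b • v) = b • π v) (hexact : LinearMap.range ι = LinearMap.ker π)
    (hι0 : ∀ v ∈ V0', ι v ∈ V0) (hπ0 : ∀ v ∈ V0, π v ∈ V0'')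
    (hst' : IsStableSub o V' (S : Set H) V0') (hst : IsStableSub o V (S : Set H) V0)
    (hst'' : IsStableSub o V'' (S : Set H) V0'')
    (hgen' : gspan o V' (Set.univ : Set H) (V0' : Set V') = ⊤) (hsurj : V0'' ≤ V0.map π) :
    (LinearMap.ker (presMap S V0)).map (indMap π hπeq hπ0) = LinearMap.ker (presMap S V0'') := by
  refine le_antisymm ?_ fun r hr => ?_
  · rintro _ ⟨f, hf, rfl⟩
    exact LinearMap.mem_ker.mpr (by rw [presMap_indMap, LinearMap.mem_ker.mp hf, map_zero])
  obtain ⟨a, rfl⟩ := indMap_surjective hπeq hπ0 hst hst'' hsurj r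
  have hPa : presMap S V0 a ∈ LinearMap.ker π := by
    rw [LinearMap.mem_ker, ← presMap_indMap hπeq hπ0]
    exact hr
  obtain ⟨w, hw⟩ := hexact.ge hPa
  obtain ⟨b, rfl⟩ := presMap_surjective hst' hgen' w
  refine ⟨a - indMap ι hιeq hι0 b, ?_, ?_⟩
  · exact LinearMap.mem_ker.mpr (by rw [map_sub, presMap_indMap, hw, sub_self])
  · rw [map_sub, indMap_indMap_eq_zero hιeq hπeq hι0 hπ0 hexact.le, sub_zero]

lemma ker_presMap_inf_ker_indMap (hιinj : Function.Injective ι)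
    (hιeq : ∀ (b : H) (v : V'), ι (b • v) = b • ι v) (hπeq : ∀ (b : H) (v : V), π (b • v) = b • π v)
    (hπι : LinearMap.range ι ≤ LinearMap.ker π)
    (hι0 : ∀ v ∈ V0', ι v ∈ V0) (hπ0 : ∀ v ∈ V0, π v ∈ V0'')
    (hker : ∀ v ∈ V0, π v = 0 → ∃ v' ∈ V0', ι v' = v) :
    LinearMap.ker (presMap S V0) ⊓ LinearMap.ker (indMap π hπeq hπ0) =
      (LinearMap.ker (presMap S V0')).map (indMap ι hιeq hι0) := by
  refine le_antisymm (fun f hf => ?_) ?_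
  · obtain ⟨g, rfl⟩ := ker_indMap_le_range hιinj hιeq hπeq hι0 hπ0 hker hf.2
    refine ⟨g, hιinj ?_, rfl⟩
    rw [map_zero, ← presMap_indMap hιeq hι0]
    exact hf.1
  · rintro _ ⟨g, hg, rfl⟩
    refine ⟨?_, indMap_indMap_eq_zero hιeq hπeq hι0 hπ0 hπι g⟩
    exact LinearMap.mem_ker.mpr (by rw [presMap_indMap, LinearMap.mem_ker.mp hg, map_zero])

end ExactInd

section FinitePresentation

variable {o : Type} [CommRing o] {H : Type} [Group H] {S : Subgroup H}
  {V : Type} [AddCommGroup V] [Module o V] [DistribMulAction H V] [SMulCommClass H o V]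

lemma finitelyPresentedVia_iff {V0 : Submodule o V} :
    FinitelyPresentedVia o S V0 ↔ ∃ _ : IsStableSub o V (S : Set H) V0,
      IsFGOver o V (S : Set H) V0 ∧ gspan o V (Set.univ : Set H) (V0 : Set V) = ⊤ ∧
      IsFGOver o (Ind o S V0) (Set.univ : Set H) (LinearMap.ker (presMap S V0)) := by
  constructor
  · rintro ⟨hst, hfg, hgen, P, hP, hker⟩
    exact ⟨hst, hfg, hgen, hP.eq_presMap ▸ hker⟩
  · rintro ⟨hst, hfg, hgen, hker⟩
    exact ⟨hst, hfg, hgen, _, isPresMap_presMap hst, hker⟩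

/-- The relations of `ind V₁ → V` are those of `ind V₀ → V` together with one relation
`[1, x] - u x` per generator `x` of `V₁`, where `u x ∈ ind V₀` is any preimage of `x`. -/
lemma FinitelyPresentedVia.mono {V0 V1 : Submodule o V} (h0 : FinitelyPresentedVia o S V0)
    (hle : V0 ≤ V1) (hst1 : IsStableSub o V (S : Set H) V1) (hfg1 : IsFGOver o V (S : Set H) V1) :
    FinitelyPresentedVia o S V1 := by
  obtain ⟨hst0, -, hgen0, hker0⟩ := finitelyPresentedVia_iff.mp h0
  have hgen1 : gspan o V (Set.univ : Set H) (V1 : Set V) = ⊤ :=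
    top_le_iff.mp (hgen0 ▸ gspan_mono hle)
  refine finitelyPresentedVia_iff.mpr ⟨hst1, hfg1, hgen1, ?_⟩
  obtain ⟨X, -, hX⟩ := hfg1
  let Φ : Ind o S V0 →ₗ[o] Ind o S V1 := indMap LinearMap.id (fun _ _ => rfl) fun _ hv => hle hv
  have hPΦ : ∀ f, presMap S V1 (Φ f) = presMap S V0 f := presMap_indMap _ _
  have hsurj := presMap_surjective hst0 hgen0
  let rel : V1 → Ind o S V1 := fun x => unitLin hst1 x - Φ (Function.surjInv hsurj x)
  let R : Finset (Ind o S V1) := (X.subtype (· ∈ V1)).image rel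
  have hR : (R : Set (Ind o S V1)) ⊆ LinearMap.ker (presMap S V1) := by
    intro r hr
    obtain ⟨x, -, rfl⟩ := Finset.mem_image.mp hr
    exact LinearMap.mem_ker.mpr (by
      rw [map_sub, hPΦ, Function.surjInv_eq hsurj]
      exact sub_eq_zero.mpr (presMap_unitElt hst1 x.2))
  have hall : ∀ f, f ∈ gspan o (Ind o S V1) (Set.univ : Set H) R ⊔ LinearMap.range Φ := by
    refine mem_of_unitElt_generators_mem hst1 hX
      ((isStableSub_gspan (fun _ _ _ _ => Set.mem_univ _) _).sup
        (isStableSub_range (indMap_smul _ _))) fun x hxV hx => ?_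
    have hrel : unitElt o hst1 hxV = rel ⟨x, hxV⟩ + Φ (Function.surjInv hsurj x) :=
      (sub_add_cancel _ _).symm
    rw [hrel]
    refine Submodule.add_mem_sup (subset_gspan (Set.mem_univ _) _ ?_) ⟨_, rfl⟩
    exact Finset.mem_image_of_mem rel (Finset.mem_subtype.mpr hx)
  have hker1 : LinearMap.ker (presMap S V1) =
      gspan o (Ind o S V1) (Set.univ : Set H) R ⊔ (LinearMap.ker (presMap S V0)).map Φ := by
    refine le_antisymm (fun f hf => ?_) (sup_le (isStableSub_ker_presMap.gspan_le hR) ?_)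
    · obtain ⟨r, hr, _, ⟨g, rfl⟩, rfl⟩ := Submodule.mem_sup.mp (hall f)
      refine Submodule.add_mem_sup hr ⟨g, LinearMap.mem_ker.mpr ?_, rfl⟩
      have hfr := LinearMap.mem_ker.mp hf
      rwa [map_add, LinearMap.mem_ker.mp (isStableSub_ker_presMap.gspan_le hR hr), zero_add,
        hPΦ] at hfr
    · rintro _ ⟨g, hg, rfl⟩
      exact LinearMap.mem_ker.mpr ((hPΦ g).trans (LinearMap.mem_ker.mp hg))
  rw [hker1]
  exact (isFGOver_gspan (Set.mem_univ _) R).sup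
    (hker0.map (Set.image_id _) fun g _ f => indMap_smul _ _ g f)

end FinitePresentation

section GenerationOfExact

variable {o : Type} [CommRing o] {H : Type} {V' : Type} [AddCommGroup V'] [Module o V'] [SMul H V']
  {V : Type} [AddCommGroup V] [Module o V] [SMul H V]
  {V'' : Type} [AddCommGroup V''] [Module o V''] [SMul H V''] {ι : V' →ₗ[o] V} {π : V →ₗ[o] V''}

lemma gspan_eq_top_of_exact (hιeq : ∀ (b : H) (v : V'), ι (b • v) = b • ι v)
    (hπeq : ∀ (b : H) (v : V), π (b • v) = b • π v) (hexact : LinearMap.range ι = LinearMap.ker π)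
    {V0' : Submodule o V'} {W0 : Submodule o V} {V0'' : Submodule o V''}
    (hgen' : gspan o V' (Set.univ : Set H) (V0' : Set V') = ⊤)
    (hgen'' : gspan o V'' (Set.univ : Set H) (V0'' : Set V'') = ⊤)
    (hι0 : V0'.map ι ≤ W0) (hπ0 : W0.map π = V0'') :
    gspan o V (Set.univ : Set H) (W0 : Set V) = ⊤ := by
  set M := gspan o V (Set.univ : Set H) (W0 : Set V)
  have hker : LinearMap.ker π ≤ M := by
    rw [← hexact, LinearMap.range_eq_map, ← hgen',
      map_gspan (Set.image_id _) (fun s _ v => hιeq s v), ← Submodule.map_coe]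
    exact gspan_mono hι0
  have hmap : M.map π = ⊤ := by
    rw [map_gspan (Set.image_id _) (fun s _ v => hπeq s v), ← Submodule.map_coe, hπ0, hgen'']
  symm
  calc ⊤ = (M.map π).comap π := by rw [hmap, Submodule.comap_top]
    _ = M ⊔ LinearMap.ker π := Submodule.comap_map_eq π M
    _ = M := sup_eq_left.mpr hker

end GenerationOfExact

section ExactSequence

variable {o : Type} [CommRing o] {H : Type} [Group H] {S : Subgroup H}
  {V' : Type} [AddCommGroup V'] [Module o V'] [DistribMulAction H V'] [SMulCommClass H o V']
  {V : Type} [AddCommGroup V] [Module o V] [DistribMulAction H V] [SMulCommClass H o V]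
  {V'' : Type} [AddCommGroup V''] [Module o V''] [DistribMulAction H V''] [SMulCommClass H o V'']
  {ι : V' →ₗ[o] V} {π : V →ₗ[o] V''}

/-- The inductions of `0 → V₀' → V₀ → V₀'' → 0` form an exact sequence, and the relations of
`ind V₀ → V` are an extension of those of `ind V₀'' → V''` by those of `ind V₀' → V'`. -/
lemma FinitelyPresentedVia.of_exact (hιinj : Function.Injective ι)
    (hιeq : ∀ (b : H) (v : V'), ι (b • v) = b • ι v)
    (hπeq : ∀ (b : H) (v : V), π (b • v) = b • π v) (hexact : LinearMap.range ι = LinearMap.ker π)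
    {V0' : Submodule o V'} {V0 : Submodule o V} {V0'' : Submodule o V''}
    (h' : FinitelyPresentedVia o S V0') (h'' : FinitelyPresentedVia o S V0'')
    (hst : IsStableSub o V (S : Set H) V0) (hι0 : V0'.map ι = V0 ⊓ LinearMap.ker π)
    (hπ0 : V0.map π = V0'') : FinitelyPresentedVia o S V0 := by
  obtain ⟨hst', hfg', hgen', hker'⟩ := finitelyPresentedVia_iff.mp h'
  obtain ⟨hst'', hfg'', hgen'', hker''⟩ := finitelyPresentedVia_iff.mp h''
  have hιmem : ∀ v ∈ V0', ι v ∈ V0 := fun v hv =>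
    (hι0 ▸ Submodule.mem_map_of_mem hv : ι v ∈ V0 ⊓ LinearMap.ker π).1
  have hπmem : ∀ v ∈ V0, π v ∈ V0'' := fun v hv => hπ0 ▸ Submodule.mem_map_of_mem hv
  have hkerπ : ∀ v ∈ V0, π v = 0 → ∃ v' ∈ V0', ι v' = v := fun v hv hπv =>
    hι0.ge ⟨hv, hπv⟩
  refine finitelyPresentedVia_iff.mpr ⟨hst, ?_, ?_, ?_⟩
  · refine IsFGOver.of_map_of_inf_ker hπeq hst (hπ0 ▸ hfg'') ?_
    exact hι0 ▸ hfg'.map (Set.image_id _) fun s _ v => hιeq s v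
  · exact gspan_eq_top_of_exact hιeq hπeq hexact hgen' hgen'' (hι0.trans_le inf_le_left) hπ0
  · refine IsFGOver.of_map_of_inf_ker (indMap_smul hπeq hπmem) isStableSub_ker_presMap ?_ ?_
    · rwa [map_indMap_ker_presMap hιeq hπeq hexact hιmem hπmem hst' hst hst'' hgen' hπ0.ge]
    · rw [ker_presMap_inf_ker_indMap hιinj hιeq hπeq hexact.le hιmem hπmem hkerπ]
      exact hker'.map (Set.image_id _) fun g _ f => indMap_smul _ _ g f

end ExactSequence

section Noetherian

variable {o : Type} [CommRing o] {H : Type} [Group H] [TopologicalSpace H]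
  {V : Type} [AddCommGroup V] [Module o V] [DistribMulAction H V] [SMulCommClass H o V]
  {S : Subgroup H}

def SmoothRepsNoetherian (o : Type) [CommRing o] (G : Type) [Group G] [TopologicalSpace G] :
    Prop :=
  ∀ (W : Type) [AddCommGroup W] [Module o W] [DistribMulAction G W] [SMulCommClass G o W],
    IsSmoothRep o G W → (∃ X : Finset W, gspan o W (Set.univ : Set G) (X : Set W) = ⊤) →
    ∀ N : Submodule o W, IsStableSub o W (Set.univ : Set G) N → IsFGOver o W (Set.univ : Set G) N

abbrev IsStableSub.distribMulAction {N : Submodule o V} (hN : IsStableSub o V (S : Set H) N) :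
    DistribMulAction S N where
  smul s v := ⟨(s : H) • (v : V), hN s s.2 v v.2⟩
  one_smul v := Subtype.ext (one_smul H (v : V))
  mul_smul a b v := Subtype.ext (mul_smul (a : H) (b : H) (v : V))
  smul_zero s := Subtype.ext (smul_zero (s : H))
  smul_add s a b := Subtype.ext (smul_add (s : H) (a : V) (b : V))

lemma IsFGOver.of_le_of_noetherian (hnoeth : SmoothRepsNoetherian o S) (hsm : IsSmoothRep o H V)
    {W0 N : Submodule o V} (hW0 : IsStableSub o V (S : Set H) W0)
    (hfg : IsFGOver o V (S : Set H) W0) (hN : IsStableSub o V (S : Set H) N) (hNW : N ≤ W0) :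
    IsFGOver o V (S : Set H) N := by
  let _ : DistribMulAction S W0 := hW0.distribMulAction
  have : SMulCommClass S o W0 := ⟨fun s c v => Subtype.ext (smul_comm (s : H) c (v : V))⟩
  have hS : Subtype.val '' (Set.univ : Set S) = (S : Set H) := by
    rw [Set.image_univ, Subtype.range_coe]
  have hsub : ∀ s ∈ (Set.univ : Set S), ∀ w : W0, W0.subtype (s • w) = (s : H) • W0.subtype w :=
    fun _ _ _ => rfl
  have hsm0 : IsSmoothRep o S W0 := fun w => by
    have hset : {s : S | s • w = w} = Subtype.val ⁻¹' {h : H | h • (w : V) = w} :=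
      Set.ext fun _ => Subtype.ext_iff
    rw [hset]
    exact (hsm w).preimage continuous_subtype_val
  obtain ⟨X, -, hX⟩ := IsFGOver.of_map_injective hS hsub W0.injective_subtype (N := ⊤)
    (by rwa [Submodule.map_subtype_top])
  have hN0 := hnoeth W0 hsm0 ⟨X, hX.symm⟩ (N.comap W0.subtype) fun s _ w hw => hN s s.2 w hw
  have hNmap := hN0.map hS hsub
  rwa [Submodule.map_comap_subtype, inf_eq_right.mpr hNW] at hNmap

end Noetherian

section Construction

variable {o : Type} [CommRing o] {H : Type} [Group H] {S : Subgroup H}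
  {V' : Type} [AddCommGroup V'] [Module o V'] [DistribMulAction H V']
  {V : Type} [AddCommGroup V] [Module o V] [DistribMulAction H V] [SMulCommClass H o V]
  {V'' : Type} [AddCommGroup V''] [Module o V''] [DistribMulAction H V'']
  {ι : V' →ₗ[o] V} {π : V →ₗ[o] V''}

lemma exists_isFGOver_map_eq (hιeq : ∀ (b : H) (v : V'), ι (b • v) = b • ι v)
    (hπeq : ∀ (b : H) (v : V), π (b • v) = b • π v) (hπsurj : Function.Surjective π)
    (hπι : π ∘ₗ ι = 0) {V0' : Submodule o V'} {V0'' : Submodule o V''}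
    (hst' : IsStableSub o V' (S : Set H) V0') (hfg' : IsFGOver o V' (S : Set H) V0')
    (hfg'' : IsFGOver o V'' (S : Set H) V0'') :
    ∃ W0 : Submodule o V, IsStableSub o V (S : Set H) W0 ∧ IsFGOver o V (S : Set H) W0 ∧
      V0'.map ι ≤ W0 ∧ W0.map π = V0'' := by
  obtain ⟨X'', -, rfl⟩ := hfg''
  let L : Finset V := X''.image (Function.surjInv hπsurj)
  refine ⟨V0'.map ι ⊔ gspan o V (S : Set H) L,
    (hst'.map hιeq).sup (isStableSub_gspan (fun _ ha _ hb => S.mul_mem ha hb) _),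
    (hfg'.map (Set.image_id _) fun s _ v => hιeq s v).sup (isFGOver_gspan S.one_mem L),
    le_sup_left, ?_⟩
  rw [Submodule.map_sup, ← Submodule.map_comp, hπι, Submodule.map_zero, bot_sup_eq,
    map_gspan (Set.image_id _) (fun s _ v => hπeq s v), Finset.coe_image, Set.image_image]
  simp only [Function.surjInv_eq hπsurj, Set.image_id']

end Construction

theorem statement8_general
    (o : Type) [CommRing o]
    (B : Type) [Group B] [TopologicalSpace B] (B0 : Subgroup B)
    (hnoeth : ∀ (W : Type) [AddCommGroup W] [Module o W] [DistribMulAction (↥B0) W]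
      [SMulCommClass (↥B0) o W], IsSmoothRep o (↥B0) W →
      (∃ X : Finset W, gspan o W (Set.univ : Set ↥B0) (X : Set W) = ⊤) →
      ∀ N : Submodule o W, IsStableSub o W (Set.univ : Set ↥B0) N →
        IsFGOver o W (Set.univ : Set ↥B0) N)
    (V' : Type) [AddCommGroup V'] [Module o V']
    [DistribMulAction B V'] [SMulCommClass B o V']
    (V : Type) [AddCommGroup V] [Module o V]
    [DistribMulAction B V] [SMulCommClass B o V]
    (hsm : IsSmoothRep o B V)
    (V'' : Type) [AddCommGroup V''] [Module o V'']
    [DistribMulAction B V''] [SMulCommClass B o V'']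
    (ι : V' →ₗ[o] V) (hιinj : Function.Injective ⇑ι)
    (hιeq : ∀ (b : B) (v : V'), ι (b • v) = b • ι v)
    (π : V →ₗ[o] V'') (hπsurj : Function.Surjective ⇑π)
    (hπeq : ∀ (b : B) (v : V), π (b • v) = b • π v)
    (hexact : LinearMap.range ι = LinearMap.ker π)
    (hV' : HasFinitePres o V' B0) (hV'' : HasFinitePres o V'' B0) :
    ∃ (V0' : Submodule o V') (V0 : Submodule o V) (V0'' : Submodule o V''),
      FinitelyPresentedVia o B0 V0' ∧ FinitelyPresentedVia o B0 V0 ∧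
      FinitelyPresentedVia o B0 V0'' ∧
      Submodule.map ι V0' ≤ V0 ∧ Submodule.map π V0 = V0'' ∧
      Submodule.map ι V0' = V0 ⊓ LinearMap.ker π := by
  obtain ⟨V0'o, h'o⟩ := hV'
  obtain ⟨V0'', h''⟩ := hV''
  obtain ⟨W0, hstW0, hfgW0, hιW0, hπW0⟩ := exists_isFGOver_map_eq hιeq hπeq hπsurj
    (LinearMap.range_le_ker_iff.mp hexact.le) h'o.1 h'o.2.1 h''.2.1
  have hιV0' : (W0.comap ι).map ι = W0 ⊓ LinearMap.ker π := by
    rw [Submodule.map_comap_eq, hexact, inf_comm]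
  have hfg' : IsFGOver o V' (B0 : Set B) (W0.comap ι) := by
    refine IsFGOver.of_map_injective (Set.image_id _) (fun s _ v => hιeq s v) hιinj (hιV0' ▸ ?_)
    exact hfgW0.of_le_of_noetherian hnoeth hsm hstW0 (hstW0.inf (isStableSub_ker hπeq)) inf_le_left
  have h' : FinitelyPresentedVia o B0 (W0.comap ι) :=
    h'o.mono (Submodule.map_le_iff_le_comap.mp hιW0) (hstW0.comap hιeq) hfg'
  exact ⟨W0.comap ι, W0, V0'', h', h'.of_exact hιinj hιeq hπeq hexact h'' hstW0 hιV0' hπW0, h'',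
    hιV0'.trans_le inf_le_left, hπW0, hιV0'⟩

/-- If the category of smooth `o`-representations of `B₀` is noetherian and
`0 → V' → V → V'' → 0` is an exact sequence of smooth `B`-representations with `V'`, `V''` of
finite presentation, then there are compatible generating submodules `V₀' → V₀ → V₀''`
forming an exact sequence of `o[B₀]`-modules and yielding finite presentations. -/
theorem statement8
    (o : Type) [CommRing o]
    (B : Type) [Group B] [TopologicalSpace B] (B0 : Subgroup B) (hB0 : IsOpen (B0 : Set B))
    (hnoeth : ∀ (W : Type) [AddCommGroup W] [Module o W] [DistribMulAction (↥B0) W]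
      [SMulCommClass (↥B0) o W], IsSmoothRep o (↥B0) W →
      (∃ X : Finset W, gspan o W (Set.univ : Set ↥B0) (X : Set W) = ⊤) →
      ∀ N : Submodule o W, IsStableSub o W (Set.univ : Set ↥B0) N →
        IsFGOver o W (Set.univ : Set ↥B0) N)
    (V' : Type) [AddCommGroup V'] [Module o V']
    [DistribMulAction B V'] [SMulCommClass B o V']
    (hsm' : IsSmoothRep o B V')
    (V : Type) [AddCommGroup V] [Module o V]
    [DistribMulAction B V] [SMulCommClass B o V]
    (hsm : IsSmoothRep o B V)
    (V'' : Type) [AddCommGroup V''] [Module o V'']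
    [DistribMulAction B V''] [SMulCommClass B o V'']
    (hsm'' : IsSmoothRep o B V'')
    (ι : V' →ₗ[o] V) (hιinj : Function.Injective ⇑ι)
    (hιeq : ∀ (b : B) (v : V'), ι (b • v) = b • ι v)
    (π : V →ₗ[o] V'') (hπsurj : Function.Surjective ⇑π)
    (hπeq : ∀ (b : B) (v : V), π (b • v) = b • π v)
    (hexact : LinearMap.range ι = LinearMap.ker π)
    (hV' : HasFinitePres o V' B0) (hV'' : HasFinitePres o V'' B0) :
    ∃ (V0' : Submodule o V') (V0 : Submodule o V) (V0'' : Submodule o V''),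
      FinitelyPresentedVia o B0 V0' ∧ FinitelyPresentedVia o B0 V0 ∧
      FinitelyPresentedVia o B0 V0'' ∧
      Submodule.map ι V0' ≤ V0 ∧ Submodule.map π V0 = V0'' ∧
      Submodule.map ι V0' = V0 ⊓ LinearMap.ker π :=
  statement8_general o B B0 hnoeth V' V hsm V'' ι hιinj hιeq π hπsurj hπeq hexact hV' hV''
end
end

section
/- Let o be a discrete valuation ring with uniformizer p_o, B a topological group, and V a smooth representation of B over o such that p_o^n V = 0 for some natural number n. Then the subrepresentation V^{p_o = 0} := {v in V : p_o v = 0} is admissible if and only if V is admissible. -/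
noncomputable section
attribute [local instance] Classical.propDecidable
open Pointwise


theorem Submodule.FG.inf_torsionBy_pow {R M : Type*} [CommRing R] [IsNoetherianRing R]
    [AddCommGroup M] [Module R M] {p : R} {P : Submodule R M}
    (hP : (P ⊓ Submodule.torsionBy R M p).FG) (k : ℕ) :
    (P ⊓ Submodule.torsionBy R M (p ^ k)).FG := by
  induction k with
  | zero =>
    rw [pow_zero, Submodule.torsionBy_one, inf_bot_eq]
    exact Submodule.fg_bot
  | succ k ih =>
    -- multiplication by `p` maps `P ⊓ M[p^(k+1)]` into `P ⊓ M[p^k]`, with kernel `P ⊓ M[p]`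
    refine Submodule.fg_of_fg_map_of_fg_inf_ker (LinearMap.lsmul R M p) (ih.of_le ?_) (hP.of_le ?_)
    · rintro _ ⟨v, ⟨hvP, hv⟩, rfl⟩
      refine ⟨P.smul_mem p hvP, ?_⟩
      rw [SetLike.mem_coe, Submodule.mem_torsionBy_iff] at hv ⊢
      rwa [LinearMap.lsmul_apply, smul_smul, ← pow_succ]
    · rintro v ⟨⟨hvP, -⟩, hv⟩
      exact ⟨hvP, hv⟩

theorem statement10_general
    (o : Type) [CommRing o] [IsDomain o] [IsDiscreteValuationRing o]
    (po : o)
    (B : Type) [Group B] [TopologicalSpace B]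
    (V : Type) [AddCommGroup V] [Module o V] [DistribMulAction B V] [SMulCommClass B o V]
    (n : ℕ) (hkill : ∀ v : V, po ^ n • v = 0) :
    (∀ H' : Subgroup B, IsCompact (H' : Set B) → IsOpen (H' : Set B) →
      (invariantsSub o B V (H' : Set B) ⊓ Submodule.torsionBy o V po).FG) ↔
    IsAdmissibleRep o B V := by
  have : IsNoetherianRing o := PrincipalIdealRing.isNoetherianRing
  refine ⟨fun h H' hc ho => ?_, fun h H' hc ho => (h H' hc ho).of_le inf_le_left⟩
  have htop : Submodule.torsionBy o V (po ^ n) = ⊤ :=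
    eq_top_iff.mpr fun v _ => (Submodule.mem_torsionBy_iff _ v).mpr (hkill v)
  simpa [htop] using (h H' hc ho).inf_torsionBy_pow n

/-- For `o` a discrete valuation ring with uniformizer `p₀` and `V` a
smooth representation killed by `p₀ⁿ`, the subrepresentation `V^{p₀ = 0}` is admissible
iff `V` is admissible. -/
theorem statement10
    (o : Type) [CommRing o] [IsDomain o] [IsDiscreteValuationRing o]
    (po : o) (hpo : Irreducible po)
    (B : Type) [Group B] [TopologicalSpace B]
    (V : Type) [AddCommGroup V] [Module o V] [DistribMulAction B V] [SMulCommClass B o V]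
    (hsm : IsSmoothRep o B V)
    (n : ℕ) (hkill : ∀ v : V, po ^ n • v = 0) :
    (∀ H' : Subgroup B, IsCompact (H' : Set B) → IsOpen (H' : Set B) →
      (invariantsSub o B V (H' : Set B) ⊓ Submodule.torsionBy o V po).FG) ↔
    IsAdmissibleRep o B V :=
  statement10_general o po B V n hkill
end
end

section
/- Let o be a noetherian commutative ring and F a nonarchimedean local field. Let B_0 Z be the subgroup of GL(2,F) generated by B_0 (upper triangular matrices with entries in O_F and unit diagonal entries) and the center Z. Then the category of smooth o-representations of B_0 Z is noetherian: every o[B_0 Z]-submodule of a smooth representation of B_0 Z over o that is finitely generated over o[B_0 Z] is itself finitely generated over o[B_0 Z]. -/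
noncomputable section
attribute [local instance] Classical.propDecidable
open Pointwise


/-! ### The group `GL(2,F)` over a nonarchimedean local field `F` -/

open Matrix

/-- Bundle of data making the field `F` a nonarchimedean local field: the valuation
ring `O`, a uniformizer `ϖ` generating the maximal ideal, finiteness of the residue
field, compatibility of the topology with the valuation, and local compactness
(equivalently, completeness). -/
structure NALF (F : Type) [Field F] [TopologicalSpace F] [IsTopologicalRing F] where
  O : Subring F
  isValRing : ∀ x : F, x ≠ 0 → x ∈ O ∨ x⁻¹ ∈ O
  ϖ : F
  ϖ_mem : ϖ ∈ O
  ϖ_ne_zero : ϖ ≠ 0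
  ϖ_not_unit : ϖ⁻¹ ∉ O
  ϖ_gen : ∀ x ∈ O, x⁻¹ ∉ O → x / ϖ ∈ O
  residue_finite : Finite (↥O ⧸ Ideal.span {(⟨ϖ, ϖ_mem⟩ : ↥O)})
  nhds_zero : ∀ s : Set F, s ∈ nhds (0 : F) ↔ ∃ n : ℕ, {x : F | ∃ y ∈ O, x = ϖ ^ n * y} ⊆ s
  locallyCompact : LocallyCompactSpace F

variable (F : Type) [Field F]

lemma GL2.inv_entry_ne (g : GL (Fin 2) F)
    (hg : (g : Matrix (Fin 2) (Fin 2) F) 1 0 = 0) :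
    ((g⁻¹ : GL (Fin 2) F) : Matrix (Fin 2) (Fin 2) F) 1 0 = 0 := by
  have hAC : (g : Matrix (Fin 2) (Fin 2) F) * ((g⁻¹ : GL (Fin 2) F) : Matrix (Fin 2) (Fin 2) F)
      = 1 := by
    rw [← Units.val_mul, mul_inv_cancel, Units.val_one]
  have h1 : ((g : Matrix (Fin 2) (Fin 2) F) *
      ((g⁻¹ : GL (Fin 2) F) : Matrix (Fin 2) (Fin 2) F)) 1 0 = 0 := by
    rw [hAC]; exact Matrix.one_apply_ne (by decide)
  have h2 : ((g : Matrix (Fin 2) (Fin 2) F) *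
      ((g⁻¹ : GL (Fin 2) F) : Matrix (Fin 2) (Fin 2) F)) 1 1 = 1 := by
    rw [hAC]; exact Matrix.one_apply_eq 1
  rw [Matrix.mul_apply, Fin.sum_univ_two, hg, zero_mul, zero_add] at h1
  rw [Matrix.mul_apply, Fin.sum_univ_two, hg, zero_mul, zero_add] at h2
  rcases mul_eq_zero.mp h1 with h | h
  · exact absurd h2 (by rw [h, zero_mul]; exact zero_ne_one)
  · exact h

/-- The upper triangular (Borel) subgroup `B ⊆ GL(2,F)`. -/
def Bgr : Subgroup (GL (Fin 2) F) where
  carrier := {g | (g : Matrix (Fin 2) (Fin 2) F) 1 0 = 0}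
  one_mem' := by
    show ((1 : GL (Fin 2) F) : Matrix (Fin 2) (Fin 2) F) 1 0 = 0
    rw [Units.val_one]; exact Matrix.one_apply_ne (by decide)
  mul_mem' := by
    intro a b ha hb
    show ((a * b : GL (Fin 2) F) : Matrix (Fin 2) (Fin 2) F) 1 0 = 0
    rw [Units.val_mul, Matrix.mul_apply, Fin.sum_univ_two]
    simp only [Set.mem_setOf_eq] at ha hb
    rw [ha, hb, zero_mul, mul_zero, add_zero]
  inv_mem' := by
    intro a ha
    exact GL2.inv_entry_ne F a ha

/-- The maximal compact subgroup `K = GL(2, O_F)` of `GL(2,F)`. -/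
def Kgr (O : Subring F) : Subgroup (GL (Fin 2) F) where
  carrier := {g | (∀ i j, (g : Matrix (Fin 2) (Fin 2) F) i j ∈ O) ∧
      (∀ i j, ((g⁻¹ : GL (Fin 2) F) : Matrix (Fin 2) (Fin 2) F) i j ∈ O)}
  one_mem' := by
    constructor <;>
    · intro i j
      simp only [inv_one, Units.val_one]
      by_cases h : i = j
      · rw [h, Matrix.one_apply_eq]; exact O.one_mem
      · rw [Matrix.one_apply_ne h]; exact O.zero_mem
  mul_mem' := by
    rintro a b ⟨ha1, ha2⟩ ⟨hb1, hb2⟩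
    constructor
    · intro i j
      rw [Units.val_mul, Matrix.mul_apply]
      exact Subring.sum_mem O fun k _ => O.mul_mem (ha1 i k) (hb1 k j)
    · intro i j
      rw [_root_.mul_inv_rev, Units.val_mul, Matrix.mul_apply]
      exact Subring.sum_mem O fun k _ => O.mul_mem (hb2 i k) (ha2 k j)
  inv_mem' := by
    rintro a ⟨ha1, ha2⟩
    refine ⟨ha2, ?_⟩
    rw [inv_inv]
    exact ha1

/-- For a subgroup `A` of a group `G`, the subgroup `A · Z(G)`. -/
def centMul {G : Type} [Group G] (A : Subgroup G) : Subgroup G where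
  carrier := {g | ∃ a ∈ A, ∃ z ∈ Subgroup.center G, g = a * z}
  one_mem' := ⟨1, A.one_mem, 1, (Subgroup.center G).one_mem, (one_mul 1).symm⟩
  mul_mem' := by
    rintro x y ⟨a, ha, z, hz, rfl⟩ ⟨a', ha', z', hz', rfl⟩
    refine ⟨a * a', A.mul_mem ha ha', z * z', (Subgroup.center G).mul_mem hz hz', ?_⟩
    have hcz : a' * z = z * a' := Subgroup.mem_center_iff.mp hz a'
    calc a * z * (a' * z') = a * (z * a' * z') := by
          rw [mul_assoc]; rw [mul_assoc z a' z']
      _ = a * (a' * z * z') := by rw [← hcz]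
      _ = a * a' * (z * z') := by rw [mul_assoc a a']; rw [mul_assoc a' z z']
  inv_mem' := by
    rintro x ⟨a, ha, z, hz, rfl⟩
    refine ⟨a⁻¹, A.inv_mem ha, z⁻¹, (Subgroup.center G).inv_mem hz, ?_⟩
    rw [_root_.mul_inv_rev]
    exact (Subgroup.mem_center_iff.mp ((Subgroup.center G).inv_mem hz) a⁻¹).symm

variable [TopologicalSpace F] [IsTopologicalRing F] (L : NALF F)

/-- The element `t = diag(ϖ, 1)`. -/
def tGL : GL (Fin 2) F :=
  Matrix.GeneralLinearGroup.mkOfDetNeZero !![L.ϖ, 0; 0, 1]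
    (by rw [Matrix.det_fin_two_of]; simpa using L.ϖ_ne_zero)

lemma tGL_val : (tGL F L : Matrix (Fin 2) (Fin 2) F) = !![L.ϖ, 0; 0, 1] := rfl

/-- The unipotent element `u(x) = (1 x; 0 1)`. -/
def uGL (x : F) : GL (Fin 2) F :=
  Matrix.GeneralLinearGroup.mkOfDetNeZero !![1, x; 0, 1]
    (by rw [Matrix.det_fin_two_of]; simp)

lemma uGL_val (x : F) : (uGL F x : Matrix (Fin 2) (Fin 2) F) = !![1, x; 0, 1] := rfl

/-- The element `ω = (0 1; ϖ 0)`. -/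
def ωGL : GL (Fin 2) F :=
  Matrix.GeneralLinearGroup.mkOfDetNeZero !![0, 1; L.ϖ, 0]
    (by rw [Matrix.det_fin_two_of]; simpa using L.ϖ_ne_zero)

lemma ωGL_val : (ωGL F L : Matrix (Fin 2) (Fin 2) F) = !![0, 1; L.ϖ, 0] := rfl

/-- `B₀ = B ∩ K`: integral upper triangular matrices with unit diagonal. -/
def B0gr : Subgroup (GL (Fin 2) F) := Bgr F ⊓ Kgr F L.O

/-- The subgroup `KZ`. -/
def KZgr : Subgroup (GL (Fin 2) F) := centMul (Kgr F L.O)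

/-- The subgroup `B₀Z`. -/
def B0Zgr : Subgroup (GL (Fin 2) F) := centMul (B0gr F L)

/-- The monoid `B⁺ = ⋃ₙ B₀ Z tⁿ`, as a subset of `GL(2,F)`. -/
def BplusGL : Set (GL (Fin 2) F) :=
  {g | ∃ b ∈ B0Zgr F L, ∃ n : ℕ, g = b * (tGL F L) ^ n}

lemma tGL_mem_Bgr : tGL F L ∈ Bgr F := by
  show (tGL F L : Matrix (Fin 2) (Fin 2) F) 1 0 = 0
  rw [tGL_val]
  simp

lemma uGL_mem_Bgr (x : F) : uGL F x ∈ Bgr F := by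
  show (uGL F x : Matrix (Fin 2) (Fin 2) F) 1 0 = 0
  rw [uGL_val]
  simp

/-- `t` as an element of `B`. -/
def tB : ↥(Bgr F) := ⟨tGL F L, tGL_mem_Bgr F L⟩

/-- `u(x)` as an element of `B`. -/
def uB (x : F) : ↥(Bgr F) := ⟨uGL F x, uGL_mem_Bgr F x⟩

/-- The monoid `B⁺` as a subset of `B`. -/
def BplusB : Set ↥(Bgr F) := {b | (b : GL (Fin 2) F) ∈ BplusGL F L}

/-- The subgroup `B₀Z` of `B`. -/
def B0Zb : Subgroup ↥(Bgr F) := (B0Zgr F L).comap (Bgr F).subtype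

/-- The subgroup `B ∩ KZ` of `B`. -/
def BcapKZb : Subgroup ↥(Bgr F) := (KZgr F L).comap (Bgr F).subtype

/-- The compact group `U₀ = U(O_F)` of integral upper unipotent matrices, as a subset. -/
def U0set : Set (GL (Fin 2) F) :=
  {g | (g : Matrix (Fin 2) (Fin 2) F) 0 0 = 1 ∧ (g : Matrix (Fin 2) (Fin 2) F) 1 1 = 1 ∧
    (g : Matrix (Fin 2) (Fin 2) F) 1 0 = 0 ∧ (g : Matrix (Fin 2) (Fin 2) F) 0 1 ∈ L.O}

/-- `U_m = U(p_F^m O_F)`, as a subset of `GL(2,F)`. -/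
def UmSet (m : ℕ) : Set (GL (Fin 2) F) :=
  {g | (g : Matrix (Fin 2) (Fin 2) F) 0 0 = 1 ∧ (g : Matrix (Fin 2) (Fin 2) F) 1 1 = 1 ∧
    (g : Matrix (Fin 2) (Fin 2) F) 1 0 = 0 ∧
    ∃ y ∈ L.O, (g : Matrix (Fin 2) (Fin 2) F) 0 1 = L.ϖ ^ m * y}

/-- `U_m⁻ = U⁻(p_F^m O_F)`, the lower unipotent congruence subgroups, as a subset. -/
def UmMinusSet (m : ℕ) : Set (GL (Fin 2) F) :=
  {g | (g : Matrix (Fin 2) (Fin 2) F) 0 0 = 1 ∧ (g : Matrix (Fin 2) (Fin 2) F) 1 1 = 1 ∧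
    (g : Matrix (Fin 2) (Fin 2) F) 0 1 = 0 ∧
    ∃ y ∈ L.O, (g : Matrix (Fin 2) (Fin 2) F) 1 0 = L.ϖ ^ m * y}

/-- `T₀ = T(O_F)`: diagonal matrices with unit entries in `O_F`, as a subset. -/
def T0set : Set (GL (Fin 2) F) :=
  {g | (g : Matrix (Fin 2) (Fin 2) F) 1 0 = 0 ∧ (g : Matrix (Fin 2) (Fin 2) F) 0 1 = 0 ∧
    (g : Matrix (Fin 2) (Fin 2) F) 0 0 ∈ L.O ∧ ((g : Matrix (Fin 2) (Fin 2) F) 0 0)⁻¹ ∈ L.O ∧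
    (g : Matrix (Fin 2) (Fin 2) F) 1 1 ∈ L.O ∧ ((g : Matrix (Fin 2) (Fin 2) F) 1 1)⁻¹ ∈ L.O}

/-- The Iwahori subgroup `I ⊆ K`, as a subset: integral matrices whose reduction is
upper triangular. -/
def Iset : Set (GL (Fin 2) F) :=
  {g | g ∈ Kgr F L.O ∧ ∃ y ∈ L.O, (g : Matrix (Fin 2) (Fin 2) F) 1 0 = L.ϖ * y}

/-- The pro-`p` Iwahori subgroup `I₁ ⊆ I`, as a subset: integral matrices whose
reduction is upper unipotent. -/
def I1set : Set (GL (Fin 2) F) :=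
  {g | g ∈ Kgr F L.O ∧ (∃ y ∈ L.O, (g : Matrix (Fin 2) (Fin 2) F) 1 0 = L.ϖ * y) ∧
    (∃ y ∈ L.O, (g : Matrix (Fin 2) (Fin 2) F) 0 0 - 1 = L.ϖ * y) ∧
    (∃ y ∈ L.O, (g : Matrix (Fin 2) (Fin 2) F) 1 1 - 1 = L.ϖ * y)}

/-- The set `IZ`. -/
def IZset : Set (GL (Fin 2) F) :=
  {g | ∃ i ∈ Iset F L, ∃ z ∈ Subgroup.center (GL (Fin 2) F), g = i * z}

/-- The set `ωIZ`. -/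
def ωIZset : Set (GL (Fin 2) F) := {g | ∃ h ∈ IZset F L, g = ωGL F L * h}

/-!
Write `ζ = p_F · id`, a central element of `B₀Z`. Since every `λ ∈ Fˣ` is `p_F^m` times a unit of
`O_F`, `B₀Z = ζ^ℤ · (B₀Z ∩ K)` with `K = GL(2, O_F)`. In a smooth representation the stabilizer of
a vector is open, so it contains a principal congruence subgroup, which has finite index in `K`;
hence every vector has a finite orbit under `B₀Z ∩ K`. A finitely generated smooth representation
is therefore finitely generated over `o[ζ, ζ⁻¹]`, a noetherian ring, and its `B₀Z`-stable
submodules are `o[ζ, ζ⁻¹]`-submodules, hence finitely generated already over `o[ζ, ζ⁻¹]`.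
-/

section Noetherian

open LaurentPolynomial

variable {o : Type} [CommRing o] {H : Type} [Group H] {W : Type} [AddCommGroup W] [Module o W]
  [DistribMulAction H W] [SMulCommClass H o W]

lemma isStableSub_gspan_univ (X : Set W) :
    IsStableSub o W (Set.univ : Set H) (gspan o W (Set.univ : Set H) X) := by
  intro g _ v hv
  induction hv using Submodule.span_induction with
  | mem x hx =>
      obtain ⟨s, -, w, hw, rfl⟩ := hx
      exact Submodule.subset_span ⟨g * s, trivial, w, hw, (mul_smul g s w).symm⟩
  | zero => rw [smul_zero]; exact Submodule.zero_mem _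
  | add x y _ _ hx hy => rw [smul_add]; exact Submodule.add_mem _ hx hy
  | smul c x _ hx => rw [smul_comm]; exact Submodule.smul_mem _ c hx

lemma isFGOver_of_isNoetherian {A : Type} [Ring A] [Module A W] [IsNoetherian A W]
    (hA : ∀ P : Submodule o W, IsStableSub o W (Set.univ : Set H) P →
      ∀ (a : A), ∀ w ∈ P, a • w ∈ P)
    (N : Submodule o W) (hN : IsStableSub o W (Set.univ : Set H) N) :
    IsFGOver o W (Set.univ : Set H) N := by
  have span_subset : ∀ (S : Set W) (P : Submodule o W), IsStableSub o W (Set.univ : Set H) P →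
      S ⊆ P → (Submodule.span A S : Set W) ⊆ P := by
    intro S P hP hSP w hw
    induction hw using Submodule.span_induction with
    | mem x hx => exact hSP hx
    | zero => exact P.zero_mem
    | add x y _ _ hx hy => exact P.add_mem hx hy
    | smul a x _ hx => exact hA P hP a x hx
  let NA : Submodule A W :=
    { carrier := N
      add_mem' := N.add_mem
      zero_mem' := N.zero_mem
      smul_mem' := fun a w hw => hA N hN a w hw }
  obtain ⟨S, hS⟩ := IsNoetherian.noetherian NA
  have hSN : (S : Set W) ⊆ N := fun x hx => by
    have hx : x ∈ NA := hS ▸ Submodule.subset_span hx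
    exact hx
  refine ⟨S, hSN, le_antisymm (fun w hw => ?_) ?_⟩
  · refine span_subset S _ (isStableSub_gspan_univ _) (fun x hx => ?_) (by rw [hS]; exact hw)
    exact Submodule.subset_span ⟨1, trivial, x, hx, (one_smul H x).symm⟩
  · refine Submodule.span_le.2 ?_
    rintro v ⟨g, -, x, hx, rfl⟩
    exact hN g trivial x (hSN hx)

variable (o W) in
def zpowersAlgHom (ζ : H) : o[T;T⁻¹] →ₐ[o] Module.End o W :=
  AddMonoidAlgebra.lift o (Module.End o W) ℤ
    ((DistribMulAction.toModuleEnd o W).comp (zpowersHom H ζ))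

lemma zpowersAlgHom_C_mul_T (ζ : H) (c : o) (m : ℤ) (w : W) :
    zpowersAlgHom o W ζ (C c * T m) w = c • ζ ^ m • w := by
  rw [← single_eq_C_mul_T, zpowersAlgHom, AddMonoidAlgebra.lift_single]
  rfl

lemma zpowersAlgHom_apply_mem (ζ : H) {P : Submodule o W}
    (hP : IsStableSub o W (Set.univ : Set H) P) (a : o[T;T⁻¹]) {w : W} (hw : w ∈ P) :
    zpowersAlgHom o W ζ a w ∈ P := by
  induction a using LaurentPolynomial.induction_on' with
  | add p q hp hq => rw [map_add, LinearMap.add_apply]; exact P.add_mem hp hq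
  | C_mul_T m c =>
      rw [zpowersAlgHom_C_mul_T]
      exact P.smul_mem c (hP _ trivial w hw)

theorem isFGOver_of_eq_zpow_mul [IsNoetherianRing o] (ζ : H) (K : Subgroup H)
    (hdec : ∀ h : H, ∃ m : ℤ, ∃ c ∈ K, h = ζ ^ m * c)
    (horb : ∀ v : W, (MulAction.orbit K v).Finite)
    (hfg : ∃ X : Finset W, gspan o W (Set.univ : Set H) (X : Set W) = ⊤)
    (N : Submodule o W) (hN : IsStableSub o W (Set.univ : Set H) N) :
    IsFGOver o W (Set.univ : Set H) N := by
  obtain ⟨X, hX⟩ := hfg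
  have : IsNoetherianRing o[T;T⁻¹] :=
    IsLocalization.isNoetherianRing (.powers (Polynomial.X : Polynomial o)) _ inferInstance
  let : Module o[T;T⁻¹] W := Module.compHom W (zpowersAlgHom o W ζ).toRingHom
  have hsmul : ∀ (c : o) (m : ℤ) (w : W), (C c * T m : o[T;T⁻¹]) • w = c • ζ ^ m • w :=
    zpowersAlgHom_C_mul_T ζ
  have : IsScalarTower o o[T;T⁻¹] W := IsScalarTower.of_algebraMap_smul fun c w => by
    simpa using hsmul c 0 w
  let Y : Set W := ⋃ x ∈ (X : Set W), MulAction.orbit K x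
  have hY : Y.Finite := X.finite_toSet.biUnion fun x _ => horb x
  have hspan : Submodule.span o[T;T⁻¹] Y = ⊤ := by
    refine eq_top_iff.2 fun w _ => ?_
    have hw : w ∈ gspan o W (Set.univ : Set H) (X : Set W) := hX ▸ trivial
    refine (Submodule.span_le (p := (Submodule.span o[T;T⁻¹] Y).restrictScalars o)).2 ?_ hw
    rintro v ⟨g, -, x, hx, rfl⟩
    obtain ⟨m, c, hc, rfl⟩ := hdec g
    have hcx : c • x ∈ Y := Set.mem_biUnion hx ⟨⟨c, hc⟩, rfl⟩
    rw [mul_smul, ← one_smul o (ζ ^ m • c • x), ← hsmul]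
    exact Submodule.smul_mem _ _ (Submodule.subset_span hcx)
  have : Module.Finite o[T;T⁻¹] W := ⟨⟨hY.toFinset, by rw [hY.coe_toFinset, hspan]⟩⟩
  have : IsNoetherian o[T;T⁻¹] W := isNoetherian_of_isNoetherianRing_of_finite _ W
  exact isFGOver_of_isNoetherian (A := o[T;T⁻¹])
    (fun P hP a w hw => zpowersAlgHom_apply_mem ζ hP a hw) N hN

end Noetherian

def Kgr.toMatrix {F : Type} [Field F] (O : Subring F) : Kgr F O →* Matrix (Fin 2) (Fin 2) O where
  toFun g := Matrix.of fun i j => ⟨((g : GL (Fin 2) F) : Matrix (Fin 2) (Fin 2) F) i j, g.2.1 i j⟩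
  map_one' := by
    ext i j
    simp [Matrix.one_apply, apply_ite (Subtype.val : O → F)]
  map_mul' g h := by
    ext i j
    simp [Matrix.mul_apply]

namespace NALF

open Filter Topology

variable {F : Type} [Field F] [TopologicalSpace F] [IsTopologicalRing F] (L : NALF F)

def ϖIdeal : Ideal L.O := Ideal.span {⟨L.ϖ, L.ϖ_mem⟩}

lemma finite_quotient_ϖIdeal_pow (n : ℕ) : Finite (L.O ⧸ L.ϖIdeal ^ n) :=
  have := L.residue_finite
  Ideal.finite_quotient_pow (Submodule.fg_span_singleton _) n

lemma exists_eq_pow_mul_of_mem_ϖIdeal_pow {n : ℕ} {x : L.O} (hx : x ∈ L.ϖIdeal ^ n) :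
    ∃ y ∈ L.O, (x : F) = L.ϖ ^ n * y := by
  rw [ϖIdeal, Ideal.span_singleton_pow, Ideal.mem_span_singleton'] at hx
  obtain ⟨y, rfl⟩ := hx
  exact ⟨y, y.2, by push_cast; ring⟩

lemma tendsto_coe_of_forall_sub_mem {α : Type} {l : Filter α} {f : α → L.O} {a : L.O}
    (h : ∀ n, ∀ᶠ x in l, f x - a ∈ L.ϖIdeal ^ n) :
    Tendsto (fun x => (f x : F)) l (𝓝 (a : F)) := by
  refine fun s hs => ?_
  have hs0 : (· + (a : F)) ⁻¹' s ∈ 𝓝 (0 : F) :=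
    (continuous_add_const (a : F)).continuousAt.preimage_mem_nhds (by simpa using hs)
  obtain ⟨n, hn⟩ := (L.nhds_zero _).1 hs0
  refine (h n).mono fun x hx => ?_
  obtain ⟨y, hy, hxy⟩ := L.exists_eq_pow_mul_of_mem_ϖIdeal_pow hx
  have hmem : (f x : F) - a + a ∈ s := hn ⟨y, hy, by simpa using hxy⟩
  simpa using hmem

lemma exists_pow_forall_ne_mul {x : F} (hx : x ≠ 0) :
    ∃ n : ℕ, ∀ y ∈ L.O, x ≠ L.ϖ ^ n * y := by
  by_contra! hdiv
  -- `x⁻¹ · p_F^k O_F ⊆ p_F O_F` for some `k`, and `x ∈ p_F^k O_F` then puts `p_F⁻¹` in `O_F`.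
  have hnhds : (x⁻¹ * ·) ⁻¹' {z : F | ∃ y ∈ L.O, z = L.ϖ ^ 1 * y} ∈ 𝓝 (0 : F) :=
    (continuous_const_mul x⁻¹).continuousAt.preimage_mem_nhds
      (by simpa using (L.nhds_zero _).2 ⟨1, subset_rfl⟩)
  obtain ⟨k, hk⟩ := (L.nhds_zero _).1 hnhds
  obtain ⟨y, hy, hxy⟩ := hk (hdiv k)
  simp only [inv_mul_cancel₀ hx, pow_one] at hxy
  exact L.ϖ_not_unit (inv_eq_of_mul_eq_one_right hxy.symm ▸ hy)

lemma exists_pow_mul_unit_of_mem {x : F} (hx : x ≠ 0) (hxO : x ∈ L.O) :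
    ∃ (k : ℕ) (u : F), u ∈ L.O ∧ u⁻¹ ∈ L.O ∧ x = L.ϖ ^ k * u := by
  obtain ⟨n, hn⟩ := L.exists_pow_forall_ne_mul hx
  induction n generalizing x with
  | zero => exact absurd (one_mul x).symm (by simpa using hn x hxO)
  | succ n ih =>
    by_cases hu : x⁻¹ ∈ L.O
    · exact ⟨0, x, hxO, hu, by rw [pow_zero, one_mul]⟩
    have hx' : x = L.ϖ * (x / L.ϖ) := by field_simp [L.ϖ_ne_zero]
    obtain ⟨k, u, huO, hu', hxu⟩ := ih (div_ne_zero hx L.ϖ_ne_zero) (L.ϖ_gen x hxO hu)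
      fun y hy hxy => hn y hy (by rw [hx', hxy]; ring)
    exact ⟨k + 1, u, huO, hu', by rw [hx', hxu]; ring⟩

lemma exists_zpow_mul_unit {x : F} (hx : x ≠ 0) :
    ∃ (m : ℤ) (u : F), u ∈ L.O ∧ u⁻¹ ∈ L.O ∧ x = L.ϖ ^ m * u := by
  rcases L.isValRing x hx with hxO | hxO
  · obtain ⟨k, u, huO, hu', hxu⟩ := L.exists_pow_mul_unit_of_mem hx hxO
    exact ⟨k, u, huO, hu', by rw [zpow_natCast, hxu]⟩
  · obtain ⟨k, u, huO, hu', hxu⟩ := L.exists_pow_mul_unit_of_mem (inv_ne_zero hx) hxO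
    refine ⟨-k, u⁻¹, hu', by rwa [inv_inv], ?_⟩
    rw [_root_.zpow_neg, zpow_natCast, ← mul_inv, ← hxu, inv_inv]


/-- Reduction modulo `p_F^n`, whose kernel is the principal congruence subgroup of level `n`. -/
def congrRed (n : ℕ) : Kgr F L.O →* (Matrix (Fin 2) (Fin 2) (L.O ⧸ L.ϖIdeal ^ n))ˣ :=
  ((Ideal.Quotient.mk (L.ϖIdeal ^ n)).mapMatrix.toMonoidHom.comp (Kgr.toMatrix L.O)).toHomUnits

lemma mem_ker_congrRed {n : ℕ} {g : Kgr F L.O} :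
    g ∈ (L.congrRed n).ker ↔
      ∀ i j, Kgr.toMatrix L.O g i j - (1 : Matrix (Fin 2) (Fin 2) L.O) i j ∈ L.ϖIdeal ^ n := by
  simp only [MonoidHom.mem_ker, Units.ext_iff, congrRed, MonoidHom.coe_toHomUnits,
    MonoidHom.comp_apply, RingHom.toMonoidHom_eq_coe, MonoidHom.coe_coe, Units.val_one,
    ← (Ideal.Quotient.mk (L.ϖIdeal ^ n)).mapMatrix.map_one, ← Ideal.Quotient.eq,
    RingHom.mapMatrix_apply]
  exact Matrix.ext_iff.symm

lemma ker_congrRed_antitone : Antitone fun n => (L.congrRed n).ker := fun _ _ hmn _ hg =>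
  L.mem_ker_congrRed.2 fun i j => Ideal.pow_le_pow_right hmn (L.mem_ker_congrRed.1 hg i j)

lemma tendsto_coe_ker_congrRed :
    Tendsto (fun g : Kgr F L.O => (g : GL (Fin 2) F))
      (⨅ n, 𝓟 ((L.congrRed n).ker : Set (Kgr F L.O))) (𝓝 1) := by
  set l := ⨅ n, 𝓟 ((L.congrRed n).ker : Set (Kgr F L.O))
  have hker : ∀ n, ∀ᶠ g in l, g ∈ (L.congrRed n).ker := fun n =>
    mem_iInf_of_mem n (mem_principal_self _)
  have hval : Tendsto (fun g : Kgr F L.O => ((g : GL (Fin 2) F) : Matrix (Fin 2) (Fin 2) F))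
      l (𝓝 1) := by
    refine tendsto_pi_nhds.2 fun i => tendsto_pi_nhds.2 fun j => ?_
    have hcoe : (((1 : Matrix (Fin 2) (Fin 2) L.O) i j : L.O) : F)
        = (1 : Matrix (Fin 2) (Fin 2) F) i j := by
      simp [Matrix.one_apply, apply_ite (Subtype.val : L.O → F)]
    rw [← hcoe]
    exact L.tendsto_coe_of_forall_sub_mem fun n =>
      (hker n).mono fun g hg => L.mem_ker_congrRed.1 hg i j
  have hinv : Tendsto (fun g : Kgr F L.O => g⁻¹) l l :=
    tendsto_iInf.2 fun n => tendsto_iInf' n <| tendsto_principal_principal.2 fun _ => inv_mem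
  rw [Units.isInducing_embedProduct.tendsto_nhds_iff]
  exact hval.prodMk_nhds ((MulOpposite.continuous_op.tendsto _).comp (hval.comp hinv))

lemma exists_forall_mem_ker_congrRed {U : Set (GL (Fin 2) F)} (hU : U ∈ 𝓝 1) :
    ∃ n, ∀ g ∈ (L.congrRed n).ker, (g : GL (Fin 2) F) ∈ U := by
  have hdir : Directed (· ≥ ·) fun n => 𝓟 ((L.congrRed n).ker : Set (Kgr F L.O)) :=
    directed_of_isDirected_le fun _ _ hmn => principal_mono.2 (L.ker_congrRed_antitone hmn)
  exact (mem_iInf_of_directed hdir _).1 (L.tendsto_coe_ker_congrRed hU)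

theorem finite_orbit_comap_Kgr {G : Subgroup (GL (Fin 2) F)} {W : Type} [MulAction G W] {v : W}
    (hv : IsOpen {g : G | g • v = v}) :
    (MulAction.orbit ((Kgr F L.O).comap G.subtype) v).Finite := by
  set K := (Kgr F L.O).comap G.subtype
  let ι : K →* Kgr F L.O := (G.subtype.comp K.subtype).codRestrict _ fun c => c.2
  obtain ⟨U, hU, hUv⟩ := (mem_nhds_subtype _ _ _).1 (hv.mem_nhds (one_smul G v))
  obtain ⟨n, hn⟩ := L.exists_forall_mem_ker_congrRed hU
  have : Finite (L.O ⧸ L.ϖIdeal ^ n) := L.finite_quotient_ϖIdeal_pow n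
  have hle : ((L.congrRed n).comp ι).ker ≤ MulAction.stabilizer K v :=
    fun c hc => hUv (hn (ι c) hc)
  have := Subgroup.finiteIndex_of_le hle
  have : Finite (MulAction.orbit K v) :=
    .of_equiv _ (MulAction.orbitEquivQuotientStabilizer K v).symm
  exact Set.toFinite _

end NALF

section Decomposition

open Matrix.GeneralLinearGroup

lemma scalar_mem_Kgr {F : Type} [Field F] {O : Subring F} {u : Fˣ} (hu : (u : F) ∈ O)
    (hu' : ((u⁻¹ : Fˣ) : F) ∈ O) : scalar (Fin 2) u ∈ Kgr F O := by
  have hmem : ∀ w : Fˣ, (w : F) ∈ O → ∀ i j,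
      ((scalar (Fin 2) w : GL (Fin 2) F) : Matrix (Fin 2) (Fin 2) F) i j ∈ O := by
    intro w hw i j
    rw [coe_scalar, Matrix.scalar_apply, Matrix.diagonal_apply]
    split_ifs
    exacts [hw, O.zero_mem]
  exact ⟨hmem u hu, by rw [← map_inv]; exact hmem u⁻¹ hu'⟩

variable {F : Type} [Field F] [TopologicalSpace F] [IsTopologicalRing F] (L : NALF F)

def zetaB0Z : B0Zgr F L :=
  ⟨scalar (Fin 2) (Units.mk0 L.ϖ L.ϖ_ne_zero),
    1, (B0gr F L).one_mem, _,
    Subgroup.mem_center_iff.2 fun g => (GeneralLinearGroup.scalar_commute _ g).symm,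
    (one_mul _).symm⟩

lemma exists_eq_zetaB0Z_zpow_mul (h : B0Zgr F L) :
    ∃ m : ℤ, ∃ c ∈ (Kgr F L.O).comap (B0Zgr F L).subtype, h = zetaB0Z L ^ m * c := by
  obtain ⟨b, hb, z, hz, hbz⟩ := h.2
  rw [center_eq_range_scalar] at hz
  obtain ⟨w, rfl⟩ := hz
  obtain ⟨m, u, hu, hu', hwu⟩ := L.exists_zpow_mul_unit w.ne_zero
  have hu0 : u ≠ 0 := by rintro rfl; simp at hwu
  set u' := Units.mk0 u hu0
  have hw : w = Units.mk0 L.ϖ L.ϖ_ne_zero ^ m * u' := Units.ext (by simp [u', hwu])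
  have hc : b * scalar (Fin 2) u' ∈ B0Zgr F L :=
    ⟨b, hb, _, Subgroup.mem_center_iff.2 fun g => (GeneralLinearGroup.scalar_commute _ g).symm,
      rfl⟩
  refine ⟨m, ⟨_, hc⟩, (Kgr F L.O).mul_mem hb.2 (scalar_mem_Kgr hu (by simpa [u'] using hu')), ?_⟩
  refine Subtype.ext ?_
  simp only [Subgroup.coe_mul, SubgroupClass.coe_zpow, zetaB0Z, hbz, hw, map_mul, ← map_zpow]
  rw [← mul_assoc, ← GeneralLinearGroup.scalar_commute _ b, mul_assoc]

end Decomposition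

/-- For a noetherian commutative ring `o`, the category of smooth
`o`-representations of `B₀Z` is noetherian: any `o[B₀Z]`-submodule of a finitely generated
smooth representation is finitely generated. -/
theorem statement11
    (o : Type) [CommRing o] [IsNoetherianRing o]
    (F : Type) [Field F] [TopologicalSpace F] [IsTopologicalRing F] (LF : NALF F)
    :
    ∀ (W : Type) [AddCommGroup W] [Module o W] [DistribMulAction (↥(B0Zgr F LF)) W]
      [SMulCommClass (↥(B0Zgr F LF)) o W],
      IsSmoothRep o (↥(B0Zgr F LF)) W →
      (∃ X : Finset W, gspan o W (Set.univ : Set ↥(B0Zgr F LF)) (X : Set W) = ⊤) →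
      ∀ N : Submodule o W, IsStableSub o W (Set.univ : Set ↥(B0Zgr F LF)) N →
        IsFGOver o W (Set.univ : Set ↥(B0Zgr F LF)) N := by
  intro W _ _ _ _ hsmooth hfg N hN
  exact isFGOver_of_eq_zpow_mul (zetaB0Z LF) _ (exists_eq_zetaB0Z_zpow_mul LF)
    (fun v => LF.finite_orbit_comap_Kgr (hsmooth v)) hfg N hN
end
end

section
/- Let F be a nonarchimedean local field, G = GL(2,F), K = GL(2,O_F), B^+ = union over n in N of B_0 Z t^n, omega = the matrix (0 1; p_F 0), and I the Iwahori subgroup of K. Then: (1) (B - B^+) K = omega B^+ K; (2) G is the disjoint union of B^+ K and omega B^+ K; (3) both B^+ K and omega B^+ K are stable under left multiplication by I. -/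
noncomputable section
attribute [local instance] Classical.propDecidable
open Pointwise


/-! ### The group `GL(2,F)` over a nonarchimedean local field `F` -/

open Matrix

variable (F : Type) [Field F]

variable [TopologicalSpace F] [IsTopologicalRing F] (L : NALF F)

/-!
Write `‖g‖ᵢ` (`L.rowVal g i`) for the largest valuation of an entry in row `i` of `g`
(multiplicative convention, so `v ≤ 1` exactly on `O_F`). Right multiplication by `K` preserves
each `‖g‖ᵢ`, and by Iwasawa every `g` can be moved into `B` by it. For `b ∈ B` the inequality
`‖b‖₀ ≤ ‖b‖₁` says exactly that `b ∈ B₀ Z tⁿ` for some `n ≥ 0`; hence `B⁺K = {‖g‖₀ ≤ ‖g‖₁}`.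
Since `ω` swaps the two rows and scales one of them by `ϖ`, and `v ϖ` is the largest value below
`1`, `ωB⁺K = {‖g‖₁ < ‖g‖₀}`. Now (2) is trichotomy, (1) follows by moving `g` into `B`, and (3)
holds because an element of `I` has unit diagonal and lower-left entry in `ϖ O_F`, so left
multiplication by it preserves both inequalities.
-/

lemma Set.mem_singleton_mul_iff_inv_mul_mem {G : Type} [Group G] {a x : G} {s : Set G} :
    x ∈ ({a} : Set G) * s ↔ a⁻¹ * x ∈ s := by
  rw [Set.singleton_mul]
  exact ⟨by rintro ⟨y, hy, rfl⟩; simpa, fun h => ⟨_, h, mul_inv_cancel_left a x⟩⟩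

lemma Matrix.mul_apply_row_fin_two {R : Type} [Semiring R] (A B : Matrix (Fin 2) (Fin 2) R)
    (i : Fin 2) : (A * B) i = A i 0 • B 0 + A i 1 • B 1 := by
  ext j
  simp [Matrix.mul_apply, Fin.sum_univ_two]

namespace Valuation

variable {R Γ₀ : Type} [Ring R] [LinearOrderedCommMonoidWithZero Γ₀] (v : Valuation R Γ₀)

def vecMax (x : Fin 2 → R) : Γ₀ := max (v (x 0)) (v (x 1))

lemma vecMax_smul (a : R) (x : Fin 2 → R) : v.vecMax (a • x) = v a * v.vecMax x := by
  simp only [vecMax, Pi.smul_apply, smul_eq_mul, map_mul, mul_max]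

lemma vecMax_neg (x : Fin 2 → R) : v.vecMax (-x) = v.vecMax x := by
  simp only [vecMax, Pi.neg_apply, map_neg]

lemma vecMax_add_le (x y : Fin 2 → R) : v.vecMax (x + y) ≤ max (v.vecMax x) (v.vecMax y) := by
  simp only [vecMax, Pi.add_apply, max_le_iff]
  exact ⟨(v.map_add _ _).trans (max_le_max le_sup_left le_sup_left),
    (v.map_add _ _).trans (max_le_max le_sup_right le_sup_right)⟩

lemma vecMax_add_eq_of_lt {x y : Fin 2 → R} (h : v.vecMax y < v.vecMax x) :
    v.vecMax (x + y) = v.vecMax x := by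
  refine le_antisymm ((v.vecMax_add_le x y).trans (max_le le_rfl h.le)) ?_
  have hx := v.vecMax_add_le (x + y) (-y)
  rw [add_neg_cancel_right, vecMax_neg] at hx
  exact (le_max_iff.1 hx).resolve_right h.not_ge

lemma vecMax_eq_zero_iff {K : Type} [DivisionRing K] [Nontrivial Γ₀] (w : Valuation K Γ₀)
    {x : Fin 2 → K} : w.vecMax x = 0 ↔ x = 0 := by
  simp [vecMax, funext_iff, Fin.forall_fin_two]

end Valuation

section

variable {F}

namespace NALF

def valuationSubring : ValuationSubring F :=
  .ofSubring L.O fun x => by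
    rcases eq_or_ne x 0 with rfl | hx
    · exact .inl L.O.zero_mem
    · exact L.isValRing x hx

abbrev val : Valuation F L.valuationSubring.ValueGroup := L.valuationSubring.valuation

lemma val_le_one_iff {x : F} : L.val x ≤ 1 ↔ x ∈ L.O :=
  L.valuationSubring.valuation_le_one_iff x

lemma val_lt_one_iff {x : F} : L.val x < 1 ↔ x = 0 ∨ x⁻¹ ∉ L.O :=
  (L.valuationSubring.mem_nonunits_iff).symm.trans L.valuationSubring.mem_nonunits_iff_or

lemma val_ϖ_lt_one : L.val L.ϖ < 1 :=
  L.val_lt_one_iff.2 (.inr L.ϖ_not_unit)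

lemma val_ϖ_ne_zero : L.val L.ϖ ≠ 0 :=
  (Valuation.ne_zero_iff _).2 L.ϖ_ne_zero

lemma val_le_val_ϖ_iff {x : F} : L.val x ≤ L.val L.ϖ ↔ L.val x < 1 := by
  refine ⟨fun h => h.trans_lt L.val_ϖ_lt_one, fun h => ?_⟩
  rcases L.val_lt_one_iff.1 h with rfl | hx
  · simp
  have hdiv : L.val (x / L.ϖ) ≤ 1 := L.val_le_one_iff.2 (L.ϖ_gen x (L.val_le_one_iff.1 h.le) hx)
  rwa [map_div₀, div_le_one₀ (zero_lt_iff.2 L.val_ϖ_ne_zero)] at hdiv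

lemma le_val_ϖ_mul_iff {a b : L.valuationSubring.ValueGroup} (hb : b ≠ 0) :
    a ≤ L.val L.ϖ * b ↔ a < b := by
  obtain ⟨x, hx⟩ := L.valuationSubring.valuation_surjective (a / b)
  have hb0 : 0 < b := zero_lt_iff.2 hb
  rw [← div_mul_cancel₀ a hb, ← hx, mul_le_mul_iff_left₀ hb0, L.val_le_val_ϖ_iff,
    mul_lt_iff_lt_one_left hb0]

/-- The only use of the topology: since the `ϖ ^ n O` form a neighbourhood basis of `0`, no nonzero
element is divisible by all powers of `ϖ`. -/
lemma exists_val_ϖ_pow_lt {x : F} (hx : x ≠ 0) : ∃ n : ℕ, L.val L.ϖ ^ n < L.val x := by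
  have hO : (L.O : Set F) ∈ nhds (0 : F) :=
    (L.nhds_zero _).2 ⟨0, fun z ⟨y, hy, hz⟩ => by simpa [hz] using hy⟩
  have hU : (x⁻¹ * ·) ⁻¹' (L.O : Set F) ∈ nhds (0 : F) :=
    (continuous_const_mul x⁻¹).continuousAt.preimage_mem_nhds (by simpa using hO)
  obtain ⟨n, hn⟩ := (L.nhds_zero _).1 hU
  have hmem : x⁻¹ * L.ϖ ^ n ∈ L.O := hn ⟨1, L.O.one_mem, (mul_one _).symm⟩
  have hle : L.val L.ϖ ^ n ≤ L.val x := by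
    rwa [← L.val_le_one_iff, map_mul, map_inv₀, map_pow,
      inv_mul_le_one₀ (zero_lt_iff.2 ((Valuation.ne_zero_iff _).2 hx))] at hmem
  refine ⟨n + 1, ?_⟩
  rw [pow_succ]
  exact (mul_lt_of_lt_one_right (zero_lt_iff.2 (pow_ne_zero n L.val_ϖ_ne_zero))
    L.val_ϖ_lt_one).trans_le hle

lemma exists_val_eq_ϖ_pow {x : F} (hx : x ∈ L.O) (h0 : x ≠ 0) :
    ∃ n : ℕ, L.val x = L.val L.ϖ ^ n := by
  classical
  have hlt := L.exists_val_ϖ_pow_lt h0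
  obtain ⟨n, hn⟩ : ∃ n, Nat.find hlt = n + 1 := Nat.exists_eq_succ_of_ne_zero fun h => by
    have := Nat.find_spec hlt
    rw [h, pow_zero] at this
    exact this.not_ge (L.val_le_one_iff.2 hx)
  have hmin : L.val x ≤ L.val L.ϖ ^ n := not_lt.1 (Nat.find_min hlt (by omega))
  have hspec : ¬ L.val x ≤ L.val L.ϖ * L.val L.ϖ ^ n := by
    simpa [← pow_succ', ← hn] using Nat.find_spec hlt
  rw [L.le_val_ϖ_mul_iff (pow_ne_zero n L.val_ϖ_ne_zero), not_lt] at hspec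
  exact ⟨n, le_antisymm hmin hspec⟩

def rowVal (g : GL (Fin 2) F) (i : Fin 2) : L.valuationSubring.ValueGroup :=
  L.val.vecMax ((g : Matrix (Fin 2) (Fin 2) F) i)

lemma rowVal_ne_zero (g : GL (Fin 2) F) (i : Fin 2) : L.rowVal g i ≠ 0 := by
  rw [rowVal, Ne, Valuation.vecMax_eq_zero_iff]
  intro h
  exact (isUnits_det_units g).ne_zero (det_eq_zero_of_row_eq_zero i fun j => congr_fun h j)

lemma rowVal_mul_eq (g h : GL (Fin 2) F) (r : Fin 2) :
    L.rowVal (g * h) r = L.val.vecMax ((g : Matrix (Fin 2) (Fin 2) F) r 0 •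
      (h : Matrix (Fin 2) (Fin 2) F) 0 + (g : Matrix (Fin 2) (Fin 2) F) r 1 •
      (h : Matrix (Fin 2) (Fin 2) F) 1) := by
  rw [rowVal, GeneralLinearGroup.coe_mul, mul_apply_row_fin_two]

lemma rowVal_mul_le (g h : GL (Fin 2) F) (hh : ∀ i j, (h : Matrix (Fin 2) (Fin 2) F) i j ∈ L.O)
    (i : Fin 2) : L.rowVal (g * h) i ≤ L.rowVal g i := by
  have hrow : ∀ k, L.val.vecMax ((h : Matrix (Fin 2) (Fin 2) F) k) ≤ 1 := fun k =>
    max_le (L.val_le_one_iff.2 (hh k 0)) (L.val_le_one_iff.2 (hh k 1))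
  rw [rowVal_mul_eq]
  refine (L.val.vecMax_add_le _ _).trans (max_le ?_ ?_) <;> rw [Valuation.vecMax_smul]
  · exact (mul_le_of_le_one_right' (hrow 0)).trans le_sup_left
  · exact (mul_le_of_le_one_right' (hrow 1)).trans le_sup_right

lemma rowVal_mul_of_mem_Kgr (g : GL (Fin 2) F) {k : GL (Fin 2) F} (hk : k ∈ Kgr F L.O)
    (i : Fin 2) : L.rowVal (g * k) i = L.rowVal g i :=
  le_antisymm (L.rowVal_mul_le g k hk.1 i) (by simpa using L.rowVal_mul_le (g * k) k⁻¹ hk.2 i)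

lemma rowVal_ωGL_mul (h : GL (Fin 2) F) :
    L.rowVal (ωGL F L * h) 0 = L.rowVal h 1 ∧
      L.rowVal (ωGL F L * h) 1 = L.val L.ϖ * L.rowVal h 0 := by
  simp only [rowVal_mul_eq, ωGL_val]
  simp [rowVal, Valuation.vecMax_smul]

lemma det_mem_of_forall_mem {A : Matrix (Fin 2) (Fin 2) F} (hA : ∀ i j, A i j ∈ L.O) :
    A.det ∈ L.O := by
  rw [det_fin_two]
  exact L.O.sub_mem (L.O.mul_mem (hA 0 0) (hA 1 1)) (L.O.mul_mem (hA 0 1) (hA 1 0))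

lemma val_det_of_mem_Kgr {k : GL (Fin 2) F} (hk : k ∈ Kgr F L.O) :
    L.val (k : Matrix (Fin 2) (Fin 2) F).det = 1 := by
  have hdet : (k : Matrix (Fin 2) (Fin 2) F).det *
      ((k⁻¹ : GL (Fin 2) F) : Matrix (Fin 2) (Fin 2) F).det = 1 := by
    rw [← det_mul, ← GeneralLinearGroup.coe_mul, mul_inv_cancel, GeneralLinearGroup.coe_one,
      det_one]
  refine eq_one_of_one_le_mul_left (L.val_le_one_iff.2 (L.det_mem_of_forall_mem hk.1))
    (L.val_le_one_iff.2 (L.det_mem_of_forall_mem hk.2)) ?_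
  rw [← map_mul, hdet, map_one]

lemma mem_Kgr_of_val_det {g : GL (Fin 2) F}
    (hg : ∀ i j, (g : Matrix (Fin 2) (Fin 2) F) i j ∈ L.O)
    (hdet : L.val (g : Matrix (Fin 2) (Fin 2) F).det = 1) : g ∈ Kgr F L.O := by
  have hinv : ((g : Matrix (Fin 2) (Fin 2) F).det)⁻¹ ∈ L.O := by
    rw [← L.val_le_one_iff, map_inv₀, hdet, inv_one]
  refine ⟨hg, fun i j => ?_⟩
  rw [coe_units_inv, inv_def, Ring.inverse_eq_inv', adjugate_fin_two]
  fin_cases i <;> fin_cases j <;> simpa using L.O.mul_mem hinv (by simpa using hg _ _)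

lemma val_diag_of_mem_Iset {i : GL (Fin 2) F} (hi : i ∈ Iset F L) :
    L.val ((i : Matrix (Fin 2) (Fin 2) F) 0 0) = 1 ∧
      L.val ((i : Matrix (Fin 2) (Fin 2) F) 1 1) = 1 := by
  obtain ⟨hK, y, hy, h10⟩ := hi
  set A := (i : Matrix (Fin 2) (Fin 2) F)
  have hoff : L.val (A 0 1 * A 1 0) < L.val A.det := by
    rw [L.val_det_of_mem_Kgr hK, h10, map_mul, map_mul]
    calc L.val (A 0 1) * (L.val L.ϖ * L.val y) ≤ 1 * (L.val L.ϖ * 1) :=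
          mul_le_mul' (L.val_le_one_iff.2 (hK.1 0 1)) (mul_le_mul' le_rfl (L.val_le_one_iff.2 hy))
      _ = L.val L.ϖ := by rw [one_mul, mul_one]
      _ < 1 := L.val_ϖ_lt_one
  have hdiag : L.val (A 0 0) * L.val (A 1 1) = 1 := by
    rw [← map_mul, ← L.val_det_of_mem_Kgr hK, ← L.val.map_add_eq_of_lt_left hoff, det_fin_two,
      sub_add_cancel]
  have h00 := L.val_le_one_iff.2 (hK.1 0 0)
  have h11 := L.val_le_one_iff.2 (hK.1 1 1)
  exact ⟨eq_one_of_one_le_mul_left h00 h11 hdiag.ge, eq_one_of_one_le_mul_right h00 h11 hdiag.ge⟩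

lemma val_lower_left_le_of_mem_Iset {i : GL (Fin 2) F} (hi : i ∈ Iset F L) :
    L.val ((i : Matrix (Fin 2) (Fin 2) F) 1 0) ≤ L.val L.ϖ := by
  obtain ⟨-, y, hy, h10⟩ := hi
  rw [h10, map_mul]
  exact mul_le_of_le_one_right' (L.val_le_one_iff.2 hy)

lemma rowVal_mul_le_of_mem_Iset {i g : GL (Fin 2) F} (hi : i ∈ Iset F L)
    (hg : L.rowVal g 0 ≤ L.rowVal g 1) : L.rowVal (i * g) 0 ≤ L.rowVal (i * g) 1 := by
  have hK := hi.1
  have hϖ : L.val L.ϖ * L.rowVal g 1 < L.rowVal g 1 :=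
    mul_lt_of_lt_one_left (zero_lt_iff.2 (L.rowVal_ne_zero g 1)) L.val_ϖ_lt_one
  have row1 : L.rowVal (i * g) 1 = L.rowVal g 1 := by
    rw [rowVal_mul_eq, add_comm, L.val.vecMax_add_eq_of_lt]
    · rw [Valuation.vecMax_smul, (L.val_diag_of_mem_Iset hi).2, one_mul, rowVal]
    · rw [Valuation.vecMax_smul, Valuation.vecMax_smul, (L.val_diag_of_mem_Iset hi).2, one_mul]
      exact (mul_le_mul' (L.val_lower_left_le_of_mem_Iset hi) hg).trans_lt hϖ
  rw [row1, rowVal_mul_eq]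
  refine (L.val.vecMax_add_le _ _).trans (max_le ?_ ?_) <;> rw [Valuation.vecMax_smul]
  · exact (mul_le_of_le_one_left' (L.val_le_one_iff.2 (hK.1 0 0))).trans hg
  · exact mul_le_of_le_one_left' (L.val_le_one_iff.2 (hK.1 0 1))

lemma rowVal_mul_lt_of_mem_Iset {i g : GL (Fin 2) F} (hi : i ∈ Iset F L)
    (hg : L.rowVal g 1 < L.rowVal g 0) : L.rowVal (i * g) 1 < L.rowVal (i * g) 0 := by
  have hK := hi.1
  have row0 : L.rowVal (i * g) 0 = L.rowVal g 0 := by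
    rw [rowVal_mul_eq, L.val.vecMax_add_eq_of_lt]
    · rw [Valuation.vecMax_smul, (L.val_diag_of_mem_Iset hi).1, one_mul, rowVal]
    · rw [Valuation.vecMax_smul, Valuation.vecMax_smul, (L.val_diag_of_mem_Iset hi).1, one_mul]
      exact (mul_le_of_le_one_left' (L.val_le_one_iff.2 (hK.1 0 1))).trans_lt hg
  rw [row0, rowVal_mul_eq]
  refine (L.val.vecMax_add_le _ _).trans_lt (max_lt ?_ ?_) <;> rw [Valuation.vecMax_smul]
  · exact (mul_le_mul' (L.val_lower_left_le_of_mem_Iset hi) le_rfl).trans_lt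
      (mul_lt_of_lt_one_left (zero_lt_iff.2 (L.rowVal_ne_zero g 0)) L.val_ϖ_lt_one)
  · exact (mul_le_of_le_one_left' (L.val_le_one_iff.2 (hK.1 1 1))).trans_lt hg

lemma exists_mem_Kgr_mul_mem_Bgr (g : GL (Fin 2) F) : ∃ k ∈ Kgr F L.O, g * k ∈ Bgr F := by
  obtain ⟨c, hgc⟩ : ∃ c, (g : Matrix (Fin 2) (Fin 2) F) 1 0 = c := ⟨_, rfl⟩
  obtain ⟨d, hgd⟩ : ∃ d, (g : Matrix (Fin 2) (Fin 2) F) 1 1 = d := ⟨_, rfl⟩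
  have hrow : max (L.val c) (L.val d) ≠ 0 := by
    simpa only [rowVal, Valuation.vecMax, hgc, hgd] using L.rowVal_ne_zero g 1
  rcases le_total (L.val c) (L.val d) with h | h
  · have hd : d ≠ 0 := (Valuation.ne_zero_iff _).1 (by rwa [max_eq_right h] at hrow)
    have hcd : c / d ∈ L.O := by
      rw [← L.val_le_one_iff, map_div₀]
      exact div_le_one_of_le₀ h zero_le
    refine ⟨GeneralLinearGroup.mkOfDetNeZero !![1, 0; -(c / d), 1] (by simp),
      L.mem_Kgr_of_val_det ?_ (by simp), ?_⟩
    · simp [Fin.forall_fin_two, L.O.one_mem, L.O.zero_mem, hcd]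
    · show ((g * _ : GL (Fin 2) F) : Matrix (Fin 2) (Fin 2) F) 1 0 = 0
      simp [mul_apply, Fin.sum_univ_two, hgc, hgd]
      field_simp
      ring
  · have hc : c ≠ 0 := (Valuation.ne_zero_iff _).1 (by rwa [max_eq_left h] at hrow)
    have hdc : d / c ∈ L.O := by
      rw [← L.val_le_one_iff, map_div₀]
      exact div_le_one_of_le₀ h zero_le
    refine ⟨GeneralLinearGroup.mkOfDetNeZero !![-(d / c), 1; 1, 0] (by simp),
      L.mem_Kgr_of_val_det ?_ (by simp), ?_⟩
    · simp [Fin.forall_fin_two, L.O.one_mem, L.O.zero_mem, hdc]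
    · show ((g * _ : GL (Fin 2) F) : Matrix (Fin 2) (Fin 2) F) 1 0 = 0
      simp [mul_apply, Fin.sum_univ_two, hgc, hgd]
      field_simp
      ring

lemma tGL_pow_val (n : ℕ) :
    ((tGL F L ^ n : GL (Fin 2) F) : Matrix (Fin 2) (Fin 2) F) = !![L.ϖ ^ n, 0; 0, 1] := by
  induction n with
  | zero => simp [one_fin_two]
  | succ n ih =>
    rw [pow_succ, GeneralLinearGroup.coe_mul, ih, tGL_val, mul_fin_two]
    simp [pow_succ]

lemma rowVal_le_of_mem_BplusGL {b : GL (Fin 2) F} (hb : b ∈ BplusGL F L) :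
    L.rowVal b 0 ≤ L.rowVal b 1 := by
  obtain ⟨_, ⟨b0, hb0, z, hz, rfl⟩, n, rfl⟩ := hb
  have hI : b0 ∈ Iset F L := ⟨hb0.2, 0, L.O.zero_mem, by rw [mul_zero]; exact hb0.1⟩
  rw [mul_assoc]
  refine L.rowVal_mul_le_of_mem_Iset hI ?_
  rw [GeneralLinearGroup.center_eq_range_scalar] at hz
  obtain ⟨c, rfl⟩ := hz
  simp only [rowVal, Valuation.vecMax, GeneralLinearGroup.coe_mul, tGL_pow_val]
  simpa using mul_le_of_le_one_right' (a := L.val (c : F)) (pow_le_one' L.val_ϖ_lt_one.le n)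

lemma mkOfDetNeZero_mem_B0gr {u x : F} (hu : L.val u = 1) (hx : x ∈ L.O)
    (h : (!![u, x; 0, 1] : Matrix (Fin 2) (Fin 2) F).det ≠ 0) :
    GeneralLinearGroup.mkOfDetNeZero !![u, x; 0, 1] h ∈ B0gr F L := by
  refine ⟨show (GeneralLinearGroup.mkOfDetNeZero _ h : Matrix (Fin 2) (Fin 2) F) 1 0 = 0 by simp,
    L.mem_Kgr_of_val_det ?_ (by simpa using hu)⟩
  simp [Fin.forall_fin_two, L.O.one_mem, L.O.zero_mem, hx, L.val_le_one_iff.1 hu.le]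

lemma mem_BplusGL_of_rowVal_le {b : GL (Fin 2) F} (hb : b ∈ Bgr F)
    (h : L.rowVal b 0 ≤ L.rowVal b 1) : b ∈ BplusGL F L := by
  obtain ⟨a, hba⟩ : ∃ a, (b : Matrix (Fin 2) (Fin 2) F) 0 0 = a := ⟨_, rfl⟩
  obtain ⟨β, hbβ⟩ : ∃ β, (b : Matrix (Fin 2) (Fin 2) F) 0 1 = β := ⟨_, rfl⟩
  obtain ⟨d, hbd⟩ : ∃ d, (b : Matrix (Fin 2) (Fin 2) F) 1 1 = d := ⟨_, rfl⟩
  have hb10 : (b : Matrix (Fin 2) (Fin 2) F) 1 0 = 0 := hb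
  have had : a * d ≠ 0 := by
    simpa [det_fin_two, hba, hbd, hb10] using (isUnits_det_units b).ne_zero
  have hd : d ≠ 0 := right_ne_zero_of_mul had
  have hle : L.val a ≤ L.val d ∧ L.val β ≤ L.val d := by
    simpa [rowVal, Valuation.vecMax, hba, hbβ, hbd, hb10] using h
  have hdiv : ∀ {x}, L.val x ≤ L.val d → x / d ∈ L.O := fun hx => by
    rw [← L.val_le_one_iff, map_div₀]
    exact div_le_one_of_le₀ hx zero_le
  obtain ⟨n, hn⟩ := L.exists_val_eq_ϖ_pow (hdiv hle.1) (div_ne_zero (left_ne_zero_of_mul had) hd)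
  set u := a / d / L.ϖ ^ n
  have hu : L.val u = 1 := by
    rw [map_div₀, hn, map_pow, div_self (pow_ne_zero n L.val_ϖ_ne_zero)]
  have hu0 : u ≠ 0 := (Valuation.ne_zero_iff _).1 (by rw [hu]; exact one_ne_zero)
  let b0 := GeneralLinearGroup.mkOfDetNeZero !![u, β / d; 0, 1] (by simpa using hu0)
  let z := GeneralLinearGroup.scalar (Fin 2) (Units.mk0 d hd)
  have hz : z ∈ Subgroup.center (GL (Fin 2) F) := by
    rw [GeneralLinearGroup.center_eq_range_scalar]
    exact ⟨_, rfl⟩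
  refine ⟨b0 * z, ⟨b0, L.mkOfDetNeZero_mem_B0gr hu (hdiv hle.2) _, z, hz, rfl⟩, n,
    GeneralLinearGroup.ext fun i j => ?_⟩
  simp only [GeneralLinearGroup.coe_mul, tGL_pow_val]
  have hϖn : L.ϖ ^ n ≠ 0 := pow_ne_zero n L.ϖ_ne_zero
  fin_cases i <;> fin_cases j <;> simp [b0, z, u, hba, hbβ, hbd, hb10] <;> field_simp

lemma mem_BplusGL_mul_Kgr_iff (g : GL (Fin 2) F) :
    g ∈ BplusGL F L * (Kgr F L.O : Set (GL (Fin 2) F)) ↔ L.rowVal g 0 ≤ L.rowVal g 1 := by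
  constructor
  · rintro ⟨b, hb, k, hk, rfl⟩
    simpa only [L.rowVal_mul_of_mem_Kgr b hk] using L.rowVal_le_of_mem_BplusGL hb
  · intro h
    obtain ⟨k, hk, hgk⟩ := L.exists_mem_Kgr_mul_mem_Bgr g
    refine ⟨g * k, L.mem_BplusGL_of_rowVal_le hgk ?_, k⁻¹, inv_mem hk, mul_inv_cancel_right g k⟩
    simpa only [L.rowVal_mul_of_mem_Kgr g hk] using h

lemma mem_ωGL_mul_BplusGL_mul_Kgr_iff (g : GL (Fin 2) F) :
    g ∈ ({ωGL F L} : Set (GL (Fin 2) F)) * (BplusGL F L * (Kgr F L.O : Set (GL (Fin 2) F))) ↔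
      L.rowVal g 1 < L.rowVal g 0 := by
  rw [Set.mem_singleton_mul_iff_inv_mul_mem, mem_BplusGL_mul_Kgr_iff]
  obtain ⟨h0, h1⟩ := L.rowVal_ωGL_mul ((ωGL F L)⁻¹ * g)
  rw [mul_inv_cancel_left] at h0 h1
  rw [← mul_le_mul_iff_right₀ (zero_lt_iff.2 L.val_ϖ_ne_zero), ← h1, ← h0,
    L.le_val_ϖ_mul_iff (L.rowVal_ne_zero g 0)]

end NALF

end

/-- `(B - B⁺) K = ω B⁺ K`, `G` is the disjoint union of `B⁺K` and
`ω B⁺ K`, and both parts are stable under left multiplication by the Iwahori subgroup. -/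
theorem statement13
    (F : Type) [Field F] [TopologicalSpace F] [IsTopologicalRing F] (LF : NALF F)
    :
    ((Bgr F : Set (GL (Fin 2) F)) \ BplusGL F LF) * (Kgr F LF.O : Set (GL (Fin 2) F))
      = ({ωGL F LF} : Set (GL (Fin 2) F)) * (BplusGL F LF * (Kgr F LF.O : Set (GL (Fin 2) F))) ∧
    (BplusGL F LF * (Kgr F LF.O : Set (GL (Fin 2) F)))
        ∪ (({ωGL F LF} : Set (GL (Fin 2) F)) * (BplusGL F LF * (Kgr F LF.O : Set (GL (Fin 2) F))))
      = Set.univ ∧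
    Disjoint (BplusGL F LF * (Kgr F LF.O : Set (GL (Fin 2) F)))
      (({ωGL F LF} : Set (GL (Fin 2) F)) * (BplusGL F LF * (Kgr F LF.O : Set (GL (Fin 2) F)))) ∧
    (∀ i ∈ Iset F LF, ∀ g ∈ BplusGL F LF * (Kgr F LF.O : Set (GL (Fin 2) F)),
      i * g ∈ BplusGL F LF * (Kgr F LF.O : Set (GL (Fin 2) F))) ∧
    (∀ i ∈ Iset F LF,
      ∀ g ∈ ({ωGL F LF} : Set (GL (Fin 2) F)) * (BplusGL F LF * (Kgr F LF.O : Set (GL (Fin 2) F))),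
      i * g ∈ ({ωGL F LF} : Set (GL (Fin 2) F)) * (BplusGL F LF * (Kgr F LF.O : Set (GL (Fin 2) F)))) := by
  have hS := LF.mem_BplusGL_mul_Kgr_iff
  have hωS := LF.mem_ωGL_mul_BplusGL_mul_Kgr_iff
  refine ⟨?_, ?_, ?_, fun i hi g hg => ?_, fun i hi g hg => ?_⟩
  · ext g
    rw [hωS]
    constructor
    · rintro ⟨b, ⟨hb, hbplus⟩, k, hk, rfl⟩
      simp only [LF.rowVal_mul_of_mem_Kgr b hk]
      exact lt_of_not_ge fun h => hbplus (LF.mem_BplusGL_of_rowVal_le hb h)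
    · intro hg
      obtain ⟨k, hk, hgk⟩ := LF.exists_mem_Kgr_mul_mem_Bgr g
      refine ⟨g * k, ⟨hgk, fun hplus => ?_⟩, k⁻¹, inv_mem hk, mul_inv_cancel_right g k⟩
      have := LF.rowVal_le_of_mem_BplusGL hplus
      simp only [LF.rowVal_mul_of_mem_Kgr g hk] at this
      exact hg.not_ge this
  · exact Set.eq_univ_of_forall fun g => by
      rw [Set.mem_union, hS, hωS]
      exact le_or_gt _ _
  · exact Set.disjoint_left.2 fun g h₁ h₂ => ((hωS g).1 h₂).not_ge ((hS g).1 h₁)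
  · rw [hS] at hg ⊢
    exact LF.rowVal_mul_le_of_mem_Iset hi hg
  · rw [hωS] at hg ⊢
    exact LF.rowVal_mul_lt_of_mem_Iset hi hg
end
end
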